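/- arXiv:2104.04037 — 8 statements merged into one kernel-verified Lean document; each statement's English description precedes it below -/
import Mathlib

section
/- Let G be a complete bipartite graph K_{n,n} with a real-valued weight function on its edges, and for each k let M_k be a maximum-weight matching of cardinality k. Then for every k < n there exists a maximum-weight matching of cardinality k+1 whose set of matched vertices contains the set of vertices matched by M_k plus exactly one additional vertex from each side. Equivalently, M_{k+1} can be chosen as M_k △ p for a single augmenting path p with respect to M_k. -/
def IsMatching (n : ℕ) (M : Finset (Fin n × Fin n)) : Prop :=
  ∀ e ∈ M, ∀ f ∈ M, e ≠ f → e.1 ≠ f.1 ∧ e.2 ≠ f.2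

noncomputable def wSum (n : ℕ) (w : Fin n → Fin n → ℝ) (S : Finset (Fin n × Fin n)) : ℝ :=
  ∑ e ∈ S, w e.1 e.2

noncomputable def maxAssign (n : ℕ) (w : Fin n → Fin n → ℝ) (k : ℕ) : ℝ :=
  sSup {x : ℝ | ∃ M : Finset (Fin n × Fin n), IsMatching n M ∧ M.card = k ∧ wSum n w M = x}

def IsAugmentingPath (n : ℕ) (M p : Finset (Fin n × Fin n)) : Prop :=
  ∃ (t : ℕ) (u v : ℕ → Fin n),
    (∀ i ≤ t, ∀ j ≤ t, u i = u j → i = j) ∧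
    (∀ i ≤ t, ∀ j ≤ t, v i = v j → i = j) ∧
    (∀ i ≤ t, (u i, v i) ∉ M) ∧
    (∀ i < t, (u (i + 1), v i) ∈ M) ∧
    (∀ e ∈ M, e.1 ≠ u 0) ∧
    (∀ e ∈ M, e.2 ≠ v t) ∧
    p = ((Finset.range (t + 1)).image fun i => (u i, v i)) ∪
        ((Finset.range t).image fun i => (u (i + 1), v i))

/-!
Take a maximum-weight `(k+1)`-matching `N` with `|M ∆ N|` minimal. A vertex `u₀` covered by `N`
but not by `M` starts a maximal path `u₀ v₀ u₁ v₁ …` alternating between edges of `N` and `M`. Its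
edge set `P` is a union of components of `M ∆ N`, so `M ∆ P` and `N ∆ P` are matchings whose
weights add up to `w(M) + w(N)`. If the path ends with an edge of `N`, it is augmenting for `M`
and the exchange shows that `M ∆ P` is a maximum-weight `(k+1)`-matching. If it ends with an edge
of `M`, then `N ∆ P` is a maximum-weight `(k+1)`-matching closer to `M`, contradicting the choice
of `N`.
-/

open Finset
open scoped symmDiff

theorem sum_symmDiff_add_sum_inter {α β : Type*} [DecidableEq α] [AddCommMonoid β]
    (s t : Finset α) (f : α → β) :
    ∑ x ∈ s ∆ t, f x + ∑ x ∈ s ∩ t, f x = ∑ x ∈ s, f x + ∑ x ∈ t \ s, f x := by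
  rw [Finset.symmDiff_def, sum_union disjoint_sdiff_sdiff, ← sum_inter_add_sum_sdiff s t f]
  abel

theorem card_symmDiff_add_card_inter {α : Type*} [DecidableEq α] (s t : Finset α) :
    #(s ∆ t) + #(s ∩ t) = #s + #(t \ s) := by
  simpa only [card_eq_sum_ones] using sum_symmDiff_add_sum_inter s t fun _ => 1

theorem sum_symmDiff_add_sum_symmDiff {α β : Type*} [DecidableEq α] [AddCancelCommMonoid β]
    {s t u : Finset α} (hu : u ⊆ s ∆ t) (f : α → β) :
    ∑ x ∈ s ∆ u, f x + ∑ x ∈ t ∆ u, f x = ∑ x ∈ s, f x + ∑ x ∈ t, f x := by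
  have hs := sum_symmDiff_add_sum_inter s u f
  have ht := sum_symmDiff_add_sum_inter t u f
  have hsu : s ∩ u = u \ t := by
    ext x; have := @hu x; simp only [mem_inter, mem_sdiff, mem_symmDiff] at this ⊢; tauto
  have htu : t ∩ u = u \ s := by
    ext x; have := @hu x; simp only [mem_inter, mem_sdiff, mem_symmDiff] at this ⊢; tauto
  rw [hsu] at hs
  rw [htu] at ht
  apply add_right_cancel (b := ∑ x ∈ u \ t, f x + ∑ x ∈ u \ s, f x)
  calc _ = (∑ x ∈ s ∆ u, f x + ∑ x ∈ u \ t, f x) +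
        (∑ x ∈ t ∆ u, f x + ∑ x ∈ u \ s, f x) := by abel
    _ = _ := by rw [hs, ht]; abel

theorem card_symmDiff_add_card_symmDiff {α : Type*} [DecidableEq α] {s t u : Finset α}
    (hu : u ⊆ s ∆ t) : #(s ∆ u) + #(t ∆ u) = #s + #t := by
  simpa only [card_eq_sum_ones] using sum_symmDiff_add_sum_symmDiff hu fun _ => 1

theorem image_subset_image_symmDiff {α γ : Type*} [DecidableEq α] [DecidableEq γ]
    {s t : Finset α} {g : α → γ}
    (h : ∀ x ∈ s, x ∈ t → ∃ y ∈ t, y ∉ s ∧ g y = g x) :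
    s.image g ⊆ (s ∆ t).image g := by
  intro z hz
  obtain ⟨x, hx, rfl⟩ := mem_image.1 hz
  by_cases hxt : x ∈ t
  · obtain ⟨y, hyt, hys, hyx⟩ := h x hx hxt
    exact mem_image.2 ⟨y, mem_symmDiff.2 (Or.inr ⟨hyt, hys⟩), hyx⟩
  · exact mem_image.2 ⟨x, mem_symmDiff.2 (Or.inl ⟨hx, hxt⟩), rfl⟩

variable {n : ℕ} {M N P : Finset (Fin n × Fin n)}

namespace IsMatching

theorem _root_.isMatching_iff :
    IsMatching n M ↔ ∀ e ∈ M, ∀ f ∈ M, e.1 = f.1 ∨ e.2 = f.2 → e = f := by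
  refine ⟨fun hM e he f hf h => ?_, fun hM e he f hf hne => ?_⟩
  · by_contra hne
    have := hM e he f hf hne
    tauto
  · exact ⟨fun h => hne (hM e he f hf (Or.inl h)), fun h => hne (hM e he f hf (Or.inr h))⟩

theorem eq_of_fst_eq_or_snd_eq (hM : IsMatching n M) {e f : Fin n × Fin n} (he : e ∈ M)
    (hf : f ∈ M) (h : e.1 = f.1 ∨ e.2 = f.2) : e = f :=
  isMatching_iff.1 hM e he f hf h

theorem eq_of_fst_eq (hM : IsMatching n M) {e f : Fin n × Fin n} (he : e ∈ M) (hf : f ∈ M)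
    (h : e.1 = f.1) : e = f :=
  hM.eq_of_fst_eq_or_snd_eq he hf (Or.inl h)

theorem eq_of_snd_eq (hM : IsMatching n M) {e f : Fin n × Fin n} (he : e ∈ M) (hf : f ∈ M)
    (h : e.2 = f.2) : e = f :=
  hM.eq_of_fst_eq_or_snd_eq he hf (Or.inr h)

theorem card_image_fst (hM : IsMatching n M) : #(M.image Prod.fst) = #M :=
  card_image_of_injOn fun _ he _ hf h => hM.eq_of_fst_eq he hf h

theorem exists_exposed_of_card_lt (hM : IsMatching n M) (hN : IsMatching n N)
    (hMN : #M < #N) : ∃ u, (∀ b, (u, b) ∉ M) ∧ ∃ b, (u, b) ∈ N := by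
  have hsub : ¬ N.image Prod.fst ⊆ M.image Prod.fst := fun h => by
    have := card_le_card h
    rw [hM.card_image_fst, hN.card_image_fst] at this
    omega
  obtain ⟨u, huN, huM⟩ := not_subset.1 hsub
  obtain ⟨⟨_, b⟩, hb, rfl⟩ := mem_image.1 huN
  exact ⟨_, fun b' hb' => huM (mem_image.2 ⟨_, hb', rfl⟩), b, hb⟩

end IsMatching

theorem wSum_symmDiff_add_wSum_symmDiff (w : Fin n → Fin n → ℝ) (hP : P ⊆ M ∆ N) :
    wSum n w (M ∆ P) + wSum n w (N ∆ P) = wSum n w M + wSum n w N :=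
  sum_symmDiff_add_sum_symmDiff hP _

structure IsMaxWeightMatching (n : ℕ) (w : Fin n → Fin n → ℝ) (k : ℕ)
    (M : Finset (Fin n × Fin n)) : Prop where
  isMatching : IsMatching n M
  card_eq : #M = k
  wSum_le : ∀ N, IsMatching n N → #N = k → wSum n w N ≤ wSum n w M

theorem exists_isMaxWeightMatching (w : Fin n → Fin n → ℝ) {k : ℕ} (hk : k ≤ n) :
    ∃ M, IsMaxWeightMatching n w k M := by
  classical
  let diag : Finset (Fin n × Fin n) :=
    univ.image fun i : Fin k => (Fin.castLE hk i, Fin.castLE hk i)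
  have hdiag : IsMatching n diag ∧ #diag = k := by
    refine ⟨?_, ?_⟩
    · simp only [diag, IsMatching, mem_image, mem_univ, true_and]
      rintro _ ⟨i, rfl⟩ _ ⟨j, rfl⟩ hij
      have : Fin.castLE hk i ≠ Fin.castLE hk j := fun h => hij (by rw [h])
      exact ⟨this, this⟩
    · rw [card_image_of_injective _ fun i j h => Fin.castLE_injective hk (Prod.ext_iff.1 h).1,
        card_univ, Fintype.card_fin]
  obtain ⟨M, hM, hmax⟩ := (univ.filter fun M => IsMatching n M ∧ #M = k).exists_max_image
    (wSum n w) ⟨diag, by simpa using hdiag⟩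
  simp only [mem_filter, mem_univ, true_and] at hM hmax
  exact ⟨M, hM.1, hM.2, fun N hN hNk => hmax N ⟨hN, hNk⟩⟩

theorem exists_isMaxWeightMatching_min_card_symmDiff (w : Fin n → Fin n → ℝ) {k : ℕ}
    (hk : k ≤ n) (M : Finset (Fin n × Fin n)) :
    ∃ N, IsMaxWeightMatching n w k N ∧
      ∀ N', IsMaxWeightMatching n w k N' → #(M ∆ N) ≤ #(M ∆ N') := by
  classical
  obtain ⟨N₀, hN₀⟩ := exists_isMaxWeightMatching w hk
  obtain ⟨N, hN, hmin⟩ := (univ.filter (IsMaxWeightMatching n w k)).exists_min_image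
    (fun N => #(M ∆ N)) ⟨N₀, by simpa using hN₀⟩
  exact ⟨N, by simpa using hN, fun N' hN' => hmin N' (by simpa using hN')⟩

def IsUnionOfComponents (M N P : Finset (Fin n × Fin n)) : Prop :=
  P ⊆ M ∆ N ∧ ∀ e ∈ P, ∀ f ∈ M ∆ N, e.1 = f.1 ∨ e.2 = f.2 → f ∈ P

namespace IsUnionOfComponents

theorem symm (hP : IsUnionOfComponents M N P) : IsUnionOfComponents N M P := by
  rw [IsUnionOfComponents, symmDiff_comm]
  exact hP

theorem mem_right (hP : IsUnionOfComponents M N P) {f : Fin n × Fin n} (hfP : f ∈ P)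
    (hfM : f ∉ M) : f ∈ N := by
  have := hP.1 hfP
  rw [mem_symmDiff] at this
  tauto

theorem mem_of_adj (hN : IsMatching n N) (hP : IsUnionOfComponents M N P)
    {e f : Fin n × Fin n} (heM : e ∈ M) (hfP : f ∈ P) (hfM : f ∉ M)
    (h : e.1 = f.1 ∨ e.2 = f.2) : e ∈ P := by
  by_cases heN : e ∈ N
  · exact absurd (hN.eq_of_fst_eq_or_snd_eq heN (hP.mem_right hfP hfM) h ▸ heM) hfM
  · exact hP.2 f hfP e (mem_symmDiff.2 (Or.inl ⟨heM, heN⟩)) (by tauto)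

theorem isMatching_symmDiff (hM : IsMatching n M) (hN : IsMatching n N)
    (hP : IsUnionOfComponents M N P) : IsMatching n (M ∆ P) := by
  refine isMatching_iff.2 fun e he f hf h => ?_
  rcases mem_symmDiff.1 he with ⟨heM, heP⟩ | ⟨heP, heM⟩ <;>
      rcases mem_symmDiff.1 hf with ⟨hfM, hfP⟩ | ⟨hfP, hfM⟩
  · exact hM.eq_of_fst_eq_or_snd_eq heM hfM h
  · exact absurd (hP.mem_of_adj hN heM hfP hfM h) heP
  · exact absurd (hP.mem_of_adj hN hfM heP heM (by tauto)) hfP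
  · exact hN.eq_of_fst_eq_or_snd_eq (hP.mem_right heP heM) (hP.mem_right hfP hfM) h

theorem card_symmDiff_symmDiff_lt (hP : IsUnionOfComponents M N P) (hne : P.Nonempty) :
    #(M ∆ (N ∆ P)) < #(M ∆ N) := by
  rw [← symmDiff_assoc, symmDiff_of_ge hP.1]
  exact card_lt_card (sdiff_ssubset hP.1 hne)

end IsUnionOfComponents

namespace IsMaxWeightMatching

variable {w : Fin n → Fin n → ℝ} {k : ℕ}

theorem symmDiff_left (hM : IsMaxWeightMatching n w k M)
    (hN : IsMaxWeightMatching n w (k + 1) N) (hP : IsUnionOfComponents M N P)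
    (hcard : #(M ∆ P) = k + 1) : IsMaxWeightMatching n w (k + 1) (M ∆ P) := by
  have hcards := card_symmDiff_add_card_symmDiff hP.1
  rw [hM.card_eq, hN.card_eq] at hcards
  have := wSum_symmDiff_add_wSum_symmDiff w hP.1
  have := hM.wSum_le _ (hP.symm.isMatching_symmDiff hN.isMatching hM.isMatching) (by omega)
  refine ⟨hP.isMatching_symmDiff hM.isMatching hN.isMatching, hcard, fun N' hN' hN'k => ?_⟩
  linarith [hN.wSum_le N' hN' hN'k]

theorem symmDiff_right (hM : IsMaxWeightMatching n w k M)
    (hN : IsMaxWeightMatching n w (k + 1) N) (hP : IsUnionOfComponents M N P)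
    (hcard : #(M ∆ P) = k) : IsMaxWeightMatching n w (k + 1) (N ∆ P) := by
  have hcards := card_symmDiff_add_card_symmDiff hP.1
  rw [hM.card_eq, hN.card_eq] at hcards
  have := wSum_symmDiff_add_wSum_symmDiff w hP.1
  have := hM.wSum_le _ (hP.isMatching_symmDiff hM.isMatching hN.isMatching) hcard
  refine ⟨hP.symm.isMatching_symmDiff hN.isMatching hM.isMatching, by omega,
    fun N' hN' hN'k => ?_⟩
  linarith [hN.wSum_le N' hN' hN'k]

end IsMaxWeightMatching

theorem IsAugmentingPath.exists_partners {p : Finset (Fin n × Fin n)}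
    (hp : IsAugmentingPath n M p) {e : Fin n × Fin n} (heM : e ∈ M) (hep : e ∈ p) :
    (∃ f ∈ p, f ∉ M ∧ f.1 = e.1) ∧ (∃ f ∈ p, f ∉ M ∧ f.2 = e.2) := by
  obtain ⟨t, u, v, -, -, hnot, -, -, -, rfl⟩ := hp
  rcases mem_union.1 hep with he | he <;> obtain ⟨i, hi, rfl⟩ := mem_image.1 he <;>
    rw [mem_range] at hi
  · exact absurd heM (hnot i (by omega))
  · have hmem : ∀ j ≤ t, (u j, v j) ∈ (range (t + 1)).image (fun i => (u i, v i)) ∪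
        (range t).image (fun i => (u (i + 1), v i)) := fun j hj =>
      mem_union_left _ (mem_image_of_mem _ (mem_range.2 (by omega)))
    exact ⟨⟨_, hmem (i + 1) (by omega), hnot _ (by omega), rfl⟩,
      ⟨_, hmem i (by omega), hnot _ (by omega), rfl⟩⟩

def IsAltWalk (M N : Finset (Fin n × Fin n)) (u v : ℕ → Fin n) (t : ℕ) : Prop :=
  ∀ i < t, (u i, v i) ∈ N ∧ (u (i + 1), v i) ∈ M

namespace IsAltWalk

variable {u v : ℕ → Fin n} {t : ℕ}

theorem left_injOn (hM : IsMatching n M) (hN : IsMatching n N) (hw : IsAltWalk M N u v t)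
    (hstart : ∀ b, (u 0, b) ∉ M) : ∀ i ≤ t, ∀ j ≤ t, u i = u j → i = j := by
  suffices h : ∀ i j, i < j → j ≤ t → u i ≠ u j by
    intro i hi j hj hij
    by_contra hne
    rcases Nat.lt_or_gt_of_ne hne with hlt | hlt
    exacts [h i j hlt hj hij, h j i hlt hi hij.symm]
  intro i
  induction i with
  | zero =>
    rintro (_ | j) hj hjt hu
    · omega
    · exact hstart (v j) (hu ▸ (hw j (by omega)).2)
  | succ i ih =>
    rintro (_ | j) hij hjt hu
    · omega
    have hv : v i = v j :=
      congrArg Prod.snd (hM.eq_of_fst_eq (hw i (by omega)).2 (hw j (by omega)).2 hu)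
    exact ih j (by omega) (by omega)
      (congrArg Prod.fst (hN.eq_of_snd_eq (hw i (by omega)).1 (hw j (by omega)).1 hv))

theorem snoc (hw : IsAltWalk M N u v t) {a b : Fin n} (hb : (u t, b) ∈ N) (ha : (a, b) ∈ M) :
    IsAltWalk M N (Function.update u (t + 1) a) (Function.update v t b) (t + 1) := by
  intro i hi
  rcases Nat.lt_succ_iff_lt_or_eq.1 hi with hi | rfl
  · rw [Function.update_of_ne (by omega), Function.update_of_ne (by omega),
      Function.update_of_ne (by omega)]
    exact hw i hi
  · simp [hb, ha]

end IsAltWalk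

theorem exists_maximal_isAltWalk (hM : IsMatching n M) (hN : IsMatching n N) {u₀ : Fin n}
    (h₀ : ∀ b, (u₀, b) ∉ M) :
    ∃ t u v, u 0 = u₀ ∧ IsAltWalk M N u v t ∧
      ∀ b, (u t, b) ∈ N → ∀ a, (a, b) ∉ M := by
  classical
  let HasWalk t := ∃ u v : ℕ → Fin n, u 0 = u₀ ∧ IsAltWalk M N u v t
  have hbound : ∀ t, HasWalk t → t < n := by
    rintro t ⟨u, v, hu₀, hw⟩
    have := card_le_card_of_injOn u (s := range (t + 1)) (t := univ) (fun _ _ => mem_univ _)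
      fun i hi j hj => hw.left_injOn hM hN (hu₀ ▸ h₀) i
        (Nat.lt_succ_iff.1 (mem_range.1 hi)) j (Nat.lt_succ_iff.1 (mem_range.1 hj))
    simp only [card_range, card_univ, Fintype.card_fin] at this
    omega
  obtain ⟨u, v, hu₀, hw⟩ : HasWalk (Nat.findGreatest HasWalk n) :=
    Nat.findGreatest_spec (Nat.zero_le n)
      ⟨fun _ => u₀, fun _ => u₀, rfl, fun _ hi => absurd hi (Nat.not_lt_zero _)⟩
  refine ⟨_, u, v, hu₀, hw, fun b hb a ha => ?_⟩
  have hlonger : HasWalk (Nat.findGreatest HasWalk n + 1) :=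
    ⟨_, _, by rw [Function.update_of_ne (by omega)]; exact hu₀, hw.snoc hb ha⟩
  exact Nat.findGreatest_is_greatest (Nat.lt_succ_self _) (hbound _ hlonger).le hlonger

def evenEdges (u v : ℕ → Fin n) (s : ℕ) : Finset (Fin n × Fin n) :=
  (range s).image fun i => (u i, v i)

def oddEdges (u v : ℕ → Fin n) (t : ℕ) : Finset (Fin n × Fin n) :=
  (range t).image fun i => (u (i + 1), v i)

def pathEdges (u v : ℕ → Fin n) (t s : ℕ) : Finset (Fin n × Fin n) :=
  evenEdges u v s ∪ oddEdges u v t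

theorem mk_mem_pathEdges_even {u v : ℕ → Fin n} {t s i : ℕ} (hi : i < s) :
    (u i, v i) ∈ pathEdges u v t s :=
  mem_union_left _ (mem_image_of_mem _ (mem_range.2 hi))

theorem mk_mem_pathEdges_odd {u v : ℕ → Fin n} {t s i : ℕ} (hi : i < t) :
    (u (i + 1), v i) ∈ pathEdges u v t s :=
  mem_union_right _ (mem_image_of_mem _ (mem_range.2 hi))

/-- `s` counts the edges in `N`: the path ends at `u t` if `s = t` and at `v t` if `s = t + 1`,
and it cannot be extended there. -/
structure IsAltPath (M N : Finset (Fin n × Fin n)) (u v : ℕ → Fin n) (t s : ℕ) : Prop where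
  walk : IsAltWalk M N u v t
  start : ∀ b, (u 0, b) ∉ M
  len : s = t ∨ s = t + 1
  last_mem : s = t + 1 → (u t, v t) ∈ N
  end_left : s = t → ∀ b, (u t, b) ∉ N
  end_right : s = t + 1 → ∀ a, (a, v t) ∉ M

theorem exists_isAltPath (hM : IsMatching n M) (hN : IsMatching n N) {u₀ b₀ : Fin n}
    (h₀ : ∀ b, (u₀, b) ∉ M) (hb₀ : (u₀, b₀) ∈ N) :
    ∃ u v t s, IsAltPath M N u v t s ∧ 0 < s := by
  obtain ⟨t, u, v, hu₀, hw, hmax⟩ := exists_maximal_isAltWalk hM hN h₀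
  by_cases hend : ∃ b, (u t, b) ∈ N
  · obtain ⟨b, hb⟩ := hend
    refine ⟨u, Function.update v t b, t, t + 1, ⟨fun i hi => ?_, hu₀ ▸ h₀, Or.inr rfl,
      fun _ => by simpa using hb, fun _ => by omega, fun _ => by simpa using hmax b hb⟩,
      by omega⟩
    rw [Function.update_of_ne (by omega)]
    exact hw i hi
  · simp only [not_exists] at hend
    refine ⟨u, v, t, t, ⟨hw, hu₀ ▸ h₀, Or.inl rfl, fun _ => by omega, fun _ => hend,
      fun _ => by omega⟩, Nat.pos_of_ne_zero fun ht => ?_⟩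
    subst ht
    exact hend b₀ (hu₀ ▸ hb₀)

namespace IsAltPath

variable {u v : ℕ → Fin n} {t s : ℕ}

theorem len_le (h : IsAltPath M N u v t s) : s ≤ t + 1 := by
  rcases h.len with rfl | rfl <;> omega

theorem le_len (h : IsAltPath M N u v t s) : t ≤ s := by
  rcases h.len with rfl | rfl <;> omega

theorem even_mem (h : IsAltPath M N u v t s) : ∀ i < s, (u i, v i) ∈ N := by
  intro i hi
  rcases Nat.lt_or_ge i t with hit | hit
  · exact (h.walk i hit).1
  · obtain rfl : i = t := by have := h.len_le; omega
    exact h.last_mem (by have := h.len_le; omega)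

theorem left_injOn (hM : IsMatching n M) (hN : IsMatching n N) (h : IsAltPath M N u v t s) :
    ∀ i ≤ t, ∀ j ≤ t, u i = u j → i = j :=
  h.walk.left_injOn hM hN h.start

theorem right_injOn (hM : IsMatching n M) (hN : IsMatching n N) (h : IsAltPath M N u v t s) :
    ∀ i < s, ∀ j < s, v i = v j → i = j := fun i hi j hj hv =>
  have := h.len_le
  h.left_injOn hM hN i (by omega) j (by omega)
    (congrArg Prod.fst (hN.eq_of_snd_eq (h.even_mem i hi) (h.even_mem j hj) hv))

theorem even_not_mem (hM : IsMatching n M) (hN : IsMatching n N) (h : IsAltPath M N u v t s) :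
    ∀ i < s, (u i, v i) ∉ M := by
  rintro (_ | i) hi hmem
  · exact h.start _ hmem
  · have := h.len_le
    have hv := congrArg Prod.snd (hM.eq_of_fst_eq hmem (h.walk i (by omega)).2 rfl)
    have := h.right_injOn hM hN (i + 1) hi i (by omega) hv
    omega

theorem odd_not_mem (hM : IsMatching n M) (hN : IsMatching n N) (h : IsAltPath M N u v t s) :
    ∀ i < t, (u (i + 1), v i) ∉ N := fun i hi hmem => by
  have hu := congrArg Prod.fst (hN.eq_of_snd_eq hmem (h.walk i hi).1 rfl)
  have := h.left_injOn hM hN (i + 1) (by omega) i (by omega) hu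
  omega

theorem inter_pathEdges (hM : IsMatching n M) (hN : IsMatching n N)
    (h : IsAltPath M N u v t s) : M ∩ pathEdges u v t s = oddEdges u v t := by
  ext e
  simp only [pathEdges, evenEdges, oddEdges, mem_inter, mem_union, mem_image, mem_range]
  constructor
  · rintro ⟨heM, ⟨i, hi, rfl⟩ | he⟩
    exacts [absurd heM (h.even_not_mem hM hN i hi), he]
  · rintro ⟨i, hi, rfl⟩
    exact ⟨(h.walk i hi).2, Or.inr ⟨i, hi, rfl⟩⟩

theorem pathEdges_sdiff (hM : IsMatching n M) (hN : IsMatching n N)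
    (h : IsAltPath M N u v t s) : pathEdges u v t s \ M = evenEdges u v s := by
  ext e
  simp only [pathEdges, evenEdges, oddEdges, mem_sdiff, mem_union, mem_image, mem_range]
  constructor
  · rintro ⟨he | ⟨i, hi, rfl⟩, heM⟩
    exacts [he, absurd (h.walk i hi).2 heM]
  · rintro ⟨i, hi, rfl⟩
    exact ⟨Or.inl ⟨i, hi, rfl⟩, h.even_not_mem hM hN i hi⟩

theorem pathEdges_subset_symmDiff (hM : IsMatching n M) (hN : IsMatching n N)
    (h : IsAltPath M N u v t s) : pathEdges u v t s ⊆ M ∆ N := by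
  intro e he
  rcases mem_union.1 he with he | he <;> obtain ⟨i, hi, rfl⟩ := mem_image.1 he <;>
    rw [mem_range] at hi
  · exact mem_symmDiff.2 (Or.inr ⟨h.even_mem i hi, h.even_not_mem hM hN i hi⟩)
  · exact mem_symmDiff.2 (Or.inl ⟨(h.walk i hi).2, h.odd_not_mem hM hN i hi⟩)

theorem mem_of_fst_eq (hM : IsMatching n M) (hN : IsMatching n N) (h : IsAltPath M N u v t s)
    {j : ℕ} (hj : j ≤ t) {f : Fin n × Fin n} (hf : f ∈ M ∆ N) (hfj : f.1 = u j) :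
    f ∈ pathEdges u v t s := by
  obtain ⟨a, b⟩ := f
  dsimp only at hfj
  subst hfj
  rcases mem_symmDiff.1 hf with ⟨hfM, -⟩ | ⟨hfN, -⟩
  · obtain _ | j := j
    · exact absurd hfM (h.start b)
    · rw [hM.eq_of_fst_eq hfM (h.walk j (by omega)).2 rfl]
      exact mk_mem_pathEdges_odd (by omega)
  · by_cases hjs : j < s
    · rw [hN.eq_of_fst_eq hfN (h.even_mem j hjs) rfl]
      exact mk_mem_pathEdges_even hjs
    · have := h.le_len
      obtain rfl : j = t := by omega
      exact absurd hfN (h.end_left (by omega) b)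

theorem mem_of_snd_eq (hM : IsMatching n M) (hN : IsMatching n N) (h : IsAltPath M N u v t s)
    {j : ℕ} (hj : j < s) {f : Fin n × Fin n} (hf : f ∈ M ∆ N) (hfj : f.2 = v j) :
    f ∈ pathEdges u v t s := by
  obtain ⟨a, b⟩ := f
  dsimp only at hfj
  subst hfj
  rcases mem_symmDiff.1 hf with ⟨hfM, -⟩ | ⟨hfN, -⟩
  · by_cases hjt : j < t
    · rw [hM.eq_of_snd_eq hfM (h.walk j hjt).2 rfl]
      exact mk_mem_pathEdges_odd hjt
    · have := h.len_le
      obtain rfl : j = t := by omega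
      exact absurd hfM (h.end_right (by omega) a)
  · rw [hN.eq_of_snd_eq hfN (h.even_mem j hj) rfl]
    exact mk_mem_pathEdges_even hj

theorem isUnionOfComponents (hM : IsMatching n M) (hN : IsMatching n N)
    (h : IsAltPath M N u v t s) : IsUnionOfComponents M N (pathEdges u v t s) := by
  refine ⟨h.pathEdges_subset_symmDiff hM hN, fun e he f hf hef => ?_⟩
  have := h.len_le
  have := h.le_len
  rcases mem_union.1 he with he | he <;> obtain ⟨i, hi, rfl⟩ := mem_image.1 he <;>
    rw [mem_range] at hi <;> rcases hef with hef | hef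
  · exact h.mem_of_fst_eq hM hN (by omega) hf hef.symm
  · exact h.mem_of_snd_eq hM hN hi hf hef.symm
  · exact h.mem_of_fst_eq hM hN (by omega) hf hef.symm
  · exact h.mem_of_snd_eq hM hN (by omega) hf hef.symm

theorem card_symmDiff (hM : IsMatching n M) (hN : IsMatching n N) (h : IsAltPath M N u v t s) :
    #(M ∆ pathEdges u v t s) + t = #M + s := by
  have := h.len_le
  have := h.le_len
  have hodd : #(oddEdges u v t) = t := by
    rw [oddEdges, card_image_of_injOn, card_range]
    intro i hi j hj hij
    simp only [coe_range, Set.mem_Iio] at hi hj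
    exact h.right_injOn hM hN i (by omega) j (by omega) (congrArg Prod.snd hij)
  have heven : #(evenEdges u v s) = s := by
    rw [evenEdges, card_image_of_injOn, card_range]
    intro i hi j hj hij
    simp only [coe_range, Set.mem_Iio] at hi hj
    exact h.left_injOn hM hN i (by omega) j (by omega) (congrArg Prod.fst hij)
  have hcard := card_symmDiff_add_card_inter M (pathEdges u v t s)
  rwa [h.inter_pathEdges hM hN, h.pathEdges_sdiff hM hN, hodd, heven] at hcard

theorem isAugmentingPath (hM : IsMatching n M) (hN : IsMatching n N)
    (h : IsAltPath M N u v t (t + 1)) : IsAugmentingPath n M (pathEdges u v t (t + 1)) :=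
  ⟨t, u, v, h.left_injOn hM hN, fun i hi j hj => h.right_injOn hM hN i (by omega) j (by omega),
    fun i hi => h.even_not_mem hM hN i (by omega), fun i hi => (h.walk i hi).2,
    fun e he he₀ => h.start e.2 (he₀ ▸ he), fun e he het => h.end_right rfl e.1 (het ▸ he),
    rfl⟩

end IsAltPath

/-- from a maximum-weight k-matching `M` in `K_{n,n}` (k < n), there is a
maximum-weight (k+1)-matching `M'` matching all vertices matched by `M` plus one extra vertex
on each side; equivalently `M' = M △ p` for a single augmenting path `p` w.r.t. `M`. -/
theorem stmt0 (n k : ℕ) (hk : k < n) (w : Fin n → Fin n → ℝ)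
    (M : Finset (Fin n × Fin n)) (hM : IsMatching n M) (hcard : M.card = k)
    (hopt : ∀ N, IsMatching n N → N.card = k → wSum n w N ≤ wSum n w M) :
    ∃ M' : Finset (Fin n × Fin n), IsMatching n M' ∧ M'.card = k + 1 ∧
      (∀ N, IsMatching n N → N.card = k + 1 → wSum n w N ≤ wSum n w M') ∧
      M.image Prod.fst ⊆ M'.image Prod.fst ∧
      M.image Prod.snd ⊆ M'.image Prod.snd ∧
      ∃ p : Finset (Fin n × Fin n), IsAugmentingPath n M p ∧ M' = symmDiff M p := by
  have hMmax : IsMaxWeightMatching n w k M := ⟨hM, hcard, hopt⟩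
  obtain ⟨N, hN, hmin⟩ := exists_isMaxWeightMatching_min_card_symmDiff w hk M
  obtain ⟨u₀, h₀, b₀, hb₀⟩ :=
    hM.exists_exposed_of_card_lt hN.isMatching (by rw [hcard, hN.card_eq]; omega)
  obtain ⟨u, v, t, s, hpath, hs⟩ := exists_isAltPath hM hN.isMatching h₀ hb₀
  have hP := hpath.isUnionOfComponents hM hN.isMatching
  have hcardP := hpath.card_symmDiff hM hN.isMatching
  rcases hpath.len with rfl | rfl
  · have hcloser := hmin _ (hMmax.symmDiff_right hN hP (by omega))
    exact absurd hcloser (not_le.2 (hP.card_symmDiff_symmDiff_lt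
      ⟨_, mk_mem_pathEdges_even hs⟩))
  · have hM' := hMmax.symmDiff_left hN hP (by omega)
    have haug := hpath.isAugmentingPath hM hN.isMatching
    exact ⟨_, hM'.isMatching, hM'.card_eq, hM'.wSum_le,
      image_subset_image_symmDiff fun e he hep => (haug.exists_partners he hep).1,
      image_subset_image_symmDiff fun e he hep => (haug.exists_partners he hep).2, _, haug, rfl⟩
end

section
/- Let G be a complete bipartite graph K_{n,n} with real edge weights, and for k = 0,1,...,n let ω_k denote the maximal total weight of a matching of cardinality k (with ω_0 = 0). Then the sequence (ω_k) is concave: for every 1 ≤ k ≤ n−1, ω_k ≥ (ω_{k−1} + ω_{k+1})/2. -/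
/-
Two matchings A and B with |B| = |A| + 2 can be recombined into two matchings C and D of size
|A| + 1 using the same edges, i.e. C + D = A + B as multisets. Taking A and B of maximal weight
gives ω_{k-1} + ω_{k+1} = w(C) + w(D) ≤ 2 ω_k.

The recombination is by induction on A. Some edge e ∈ B has its left end uncovered by A. If its
right end is uncovered too, move e from B to A. Otherwise it is covered by some a ∈ A; recombine
A - a and B - e into X and Y, and since the left end of a lies on at most one edge of
(A - a) + (B - e), one of X, Y, say Y, misses it; then C = X + e and D = Y + a.
-/

section BipartiteMatching

variable {α β : Type*}

structure IsBipartiteMatching (M : Finset (α × β)) : Prop where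
  injOn_fst : Set.InjOn Prod.fst (M : Set (α × β))
  injOn_snd : Set.InjOn Prod.snd (M : Set (α × β))

namespace IsBipartiteMatching

variable {M : Finset (α × β)}

theorem subset (hM : IsBipartiteMatching M) {S : Finset (α × β)} (h : S ⊆ M) :
    IsBipartiteMatching S :=
  ⟨hM.injOn_fst.mono (Finset.coe_subset.2 h), hM.injOn_snd.mono (Finset.coe_subset.2 h)⟩

theorem insert_of_forall_ne [DecidableEq α] [DecidableEq β] (hM : IsBipartiteMatching M)
    {e : α × β} (h : ∀ x ∈ M, x.1 ≠ e.1 ∧ x.2 ≠ e.2) : IsBipartiteMatching (insert e M) := by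
  have he : e ∉ (M : Set (α × β)) := fun he => (h e he).1 rfl
  constructor <;> rw [Finset.coe_insert, Set.injOn_insert he]
  · exact ⟨hM.injOn_fst, fun ⟨x, hx, hxe⟩ => (h x hx).1 hxe⟩
  · exact ⟨hM.injOn_snd, fun ⟨x, hx, hxe⟩ => (h x hx).2 hxe⟩

theorem ne_of_mem_erase [DecidableEq α] [DecidableEq β] (hM : IsBipartiteMatching M)
    {m x : α × β} (hm : m ∈ M) (hx : x ∈ M.erase m) : x.1 ≠ m.1 ∧ x.2 ≠ m.2 :=
  ⟨fun h => Finset.ne_of_mem_erase hx (hM.injOn_fst (Finset.mem_of_mem_erase hx) hm h),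
    fun h => Finset.ne_of_mem_erase hx (hM.injOn_snd (Finset.mem_of_mem_erase hx) hm h)⟩

end IsBipartiteMatching

theorem isBipartiteMatching_diag [DecidableEq α] (s : Finset α) : IsBipartiteMatching s.diag := by
  constructor <;> intro x hx y hy h <;>
    obtain ⟨-, hx⟩ := Finset.mem_diag.1 hx <;> obtain ⟨-, hy⟩ := Finset.mem_diag.1 hy <;>
    exact Prod.ext (by simp_all) (by simp_all)

theorem exists_mem_forall_fst_ne [DecidableEq α] {A B : Finset (α × β)}
    (hB : Set.InjOn Prod.fst (B : Set (α × β))) (h : A.card < B.card) :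
    ∃ e ∈ B, ∀ x ∈ A, x.1 ≠ e.1 := by
  have hlt : (A.image Prod.fst).card < (B.image Prod.fst).card := by
    rw [Finset.card_image_of_injOn hB]
    exact Finset.card_image_le.trans_lt h
  obtain ⟨v, hvB, hvA⟩ := Finset.exists_mem_notMem_of_card_lt_card hlt
  obtain ⟨e, heB, rfl⟩ := Finset.mem_image.1 hvB
  exact ⟨e, heB, fun x hx hxe => hvA (Finset.mem_image.2 ⟨x, hx, hxe⟩)⟩

theorem mem_or_mem_of_val_add_eq {X Y A B : Finset (α × β)}
    (h : X.val + Y.val = A.val + B.val) {x : α × β} (hx : x ∈ X ∨ x ∈ Y) : x ∈ A ∨ x ∈ B := by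
  have := congrArg (x ∈ ·) h
  simp only [Multiset.mem_add, Finset.mem_val, eq_iff_iff] at this
  exact this.1 hx

theorem countP_fst_eq_le_one [DecidableEq α] {M : Finset (α × β)}
    (hM : Set.InjOn Prod.fst (M : Set (α × β))) (v : α) : M.val.countP (fun x => x.1 = v) ≤ 1 := by
  rw [Multiset.countP_eq_card_filter, ← Finset.filter_val, Finset.card_val, Finset.card_le_one]
  intro x hx y hy
  rw [Finset.mem_filter] at hx hy
  exact hM hx.1 hy.1 (hx.2.trans hy.2.symm)

theorem forall_fst_ne_or_forall_fst_ne [DecidableEq α] [DecidableEq β]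
    {A B X Y : Finset (α × β)} {a : α × β}
    (hA : IsBipartiteMatching A) (hB : Set.InjOn Prod.fst (B : Set (α × β))) (ha : a ∈ A)
    (h : X.val + Y.val = (A.erase a).val + B.val) :
    (∀ x ∈ X, x.1 ≠ a.1) ∨ (∀ y ∈ Y, y.1 ≠ a.1) := by
  have hcount := congrArg (Multiset.countP (fun x : α × β => x.1 = a.1)) h
  have hA0 : (A.erase a).val.countP (fun x => x.1 = a.1) = 0 :=
    Multiset.countP_eq_zero.2 fun x hx => (hA.ne_of_mem_erase ha hx).1
  rw [Multiset.countP_add, Multiset.countP_add, hA0] at hcount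
  have hB1 := countP_fst_eq_le_one hB a.1
  by_contra! hXY
  obtain ⟨⟨x, hx, hxa⟩, ⟨y, hy, hya⟩⟩ := hXY
  have hX : 0 < X.val.countP (fun x : α × β => x.1 = a.1) := Multiset.countP_pos.2 ⟨x, hx, hxa⟩
  have hY : 0 < Y.val.countP (fun x : α × β => x.1 = a.1) := Multiset.countP_pos.2 ⟨y, hy, hya⟩
  omega

theorem exists_recombination_of_erase [DecidableEq α] [DecidableEq β]
    {A B X Y : Finset (α × β)} {a e : α × β} (ha : a ∈ A) (he : e ∈ B)
    (hX : IsBipartiteMatching X) (hY : IsBipartiteMatching Y)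
    (hXc : X.card = A.card) (hYc : Y.card = A.card)
    (hXY : X.val + Y.val = (A.erase a).val + (B.erase e).val)
    (hXe : ∀ x ∈ X, x.1 ≠ e.1 ∧ x.2 ≠ e.2) (hYa : ∀ y ∈ Y, y.1 ≠ a.1 ∧ y.2 ≠ a.2) :
    ∃ C D : Finset (α × β), IsBipartiteMatching C ∧ IsBipartiteMatching D ∧
      C.card = A.card + 1 ∧ D.card = A.card + 1 ∧ C.val + D.val = A.val + B.val := by
  have heX : e ∉ X := fun h => (hXe e h).1 rfl
  have haY : a ∉ Y := fun h => (hYa a h).1 rfl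
  refine ⟨insert e X, insert a Y, hX.insert_of_forall_ne hXe, hY.insert_of_forall_ne hYa,
    ?_, ?_, ?_⟩
  · rw [Finset.card_insert_of_notMem heX, hXc]
  · rw [Finset.card_insert_of_notMem haY, hYc]
  · rw [Finset.insert_val_of_notMem heX, Finset.insert_val_of_notMem haY,
      ← Multiset.cons_erase ha, ← Multiset.cons_erase he,
      ← Finset.erase_val, ← Finset.erase_val, Multiset.cons_add, Multiset.add_cons,
      Multiset.cons_add, Multiset.add_cons, hXY, Multiset.cons_swap]

theorem IsBipartiteMatching.exists_recombination [DecidableEq α] [DecidableEq β]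
    {A B : Finset (α × β)}
    (hA : IsBipartiteMatching A) (hB : IsBipartiteMatching B) (hcard : B.card = A.card + 2) :
    ∃ C D : Finset (α × β), IsBipartiteMatching C ∧ IsBipartiteMatching D ∧
      C.card = A.card + 1 ∧ D.card = A.card + 1 ∧ C.val + D.val = A.val + B.val := by
  induction A using Finset.strongInduction generalizing B with
  | H A ih =>
  obtain ⟨e, heB, heA⟩ := exists_mem_forall_fst_ne hB.injOn_fst (by omega : A.card < B.card)
  by_cases hcov : ∃ a ∈ A, a.2 = e.2
  · obtain ⟨a, haA, hae⟩ := hcov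
    have hAc := Finset.card_erase_add_one haA
    obtain ⟨X, Y, hX, hY, hXc, hYc, hXY⟩ :=
      ih _ (Finset.erase_ssubset haA) (hA.subset (Finset.erase_subset _ _))
        (hB.subset (Finset.erase_subset _ _)) (by rw [Finset.card_erase_of_mem heB]; omega)
    have hfree : ∀ x, x ∈ X ∨ x ∈ Y → x.1 ≠ e.1 ∧ x.2 ≠ a.2 := by
      intro x hx
      rcases mem_or_mem_of_val_add_eq hXY hx with hxA | hxB
      · exact ⟨heA x (Finset.mem_of_mem_erase hxA), (hA.ne_of_mem_erase haA hxA).2⟩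
      · exact hae ▸ hB.ne_of_mem_erase heB hxB
    rcases forall_fst_ne_or_forall_fst_ne hA (hB.subset (Finset.erase_subset _ _)).injOn_fst haA hXY
      with hXa | hYa
    · exact exists_recombination_of_erase haA heB hY hX (by omega) (by omega)
        (by rw [add_comm, hXY]) (fun y hy => hae ▸ hfree y (.inr hy))
        (fun x hx => ⟨hXa x hx, (hfree x (.inl hx)).2⟩)
    · exact exists_recombination_of_erase haA heB hX hY (by omega) (by omega) hXY
        (fun x hx => hae ▸ hfree x (.inl hx)) (fun y hy => ⟨hYa y hy, (hfree y (.inr hy)).2⟩)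
  · push Not at hcov
    have heA' : e ∉ A := fun h => heA e h rfl
    refine ⟨insert e A, B.erase e, hA.insert_of_forall_ne fun x hx => ⟨heA x hx, hcov x hx⟩,
      hB.subset (Finset.erase_subset _ _), Finset.card_insert_of_notMem heA', ?_, ?_⟩
    · rw [Finset.card_erase_of_mem heB]; omega
    · rw [Finset.insert_val_of_notMem heA', Finset.erase_val, Multiset.cons_add,
        ← Multiset.add_cons, Multiset.cons_erase heB]

end BipartiteMatching

theorem Finset.sum_add_sum_eq_of_val_add_eq {ι M : Type*} [AddCommMonoid M] (f : ι → M)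
    {s t u v : Finset ι} (h : s.val + t.val = u.val + v.val) :
    ∑ x ∈ s, f x + ∑ x ∈ t, f x = ∑ x ∈ u, f x + ∑ x ∈ v, f x := by
  simp only [Finset.sum_eq_multiset_sum, ← Multiset.sum_add, ← Multiset.map_add, h]

section Assignment

variable {n : ℕ}

theorem isMatching_iff_isBipartiteMatching {M : Finset (Fin n × Fin n)} :
    IsMatching n M ↔ IsBipartiteMatching M := by
  refine ⟨fun h => ⟨?_, ?_⟩, fun ⟨h₁, h₂⟩ e he f hf hne => ⟨?_, ?_⟩⟩
  · exact fun e he f hf hef => by_contra fun hne => (h e he f hf hne).1 hef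
  · exact fun e he f hf hef => by_contra fun hne => (h e he f hf hne).2 hef
  · exact fun hef => hne (h₁ he hf hef)
  · exact fun hef => hne (h₂ he hf hef)

theorem exists_isMatching_card_eq {k : ℕ} (hk : k ≤ n) :
    ∃ M : Finset (Fin n × Fin n), IsMatching n M ∧ M.card = k := by
  obtain ⟨M, hM, hcard⟩ := Finset.exists_subset_card_eq
    (s := (Finset.univ : Finset (Fin n)).diag) (by simpa using hk)
  exact ⟨M, isMatching_iff_isBipartiteMatching.2 ((isBipartiteMatching_diag _).subset hM), hcard⟩

theorem finite_setOf_wSum (w : Fin n → Fin n → ℝ) (k : ℕ) :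
    {x : ℝ | ∃ M, IsMatching n M ∧ M.card = k ∧ wSum n w M = x}.Finite :=
  (Set.finite_range (wSum n w)).subset fun _ ⟨M, _, _, hM⟩ => ⟨M, hM⟩

theorem wSum_le_maxAssign (w : Fin n → Fin n → ℝ) {M : Finset (Fin n × Fin n)}
    (hM : IsMatching n M) {k : ℕ} (hk : M.card = k) : wSum n w M ≤ maxAssign n w k :=
  le_csSup (finite_setOf_wSum w k).bddAbove ⟨M, hM, hk, rfl⟩

theorem exists_wSum_eq_maxAssign (w : Fin n → Fin n → ℝ) {k : ℕ} (hk : k ≤ n) :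
    ∃ M : Finset (Fin n × Fin n), IsMatching n M ∧ M.card = k ∧ wSum n w M = maxAssign n w k :=
  have ⟨M, hM, hcard⟩ := exists_isMatching_card_eq hk
  Set.Nonempty.csSup_mem (s := {x | ∃ M, IsMatching n M ∧ M.card = k ∧ wSum n w M = x})
    ⟨_, M, hM, hcard, rfl⟩ (finite_setOf_wSum w k)

end Assignment

/-- the sequence of maximal weights of k-cardinality matchings in a weighted
`K_{n,n}` is concave. -/
theorem stmt1 (n : ℕ) (w : Fin n → Fin n → ℝ) (k : ℕ) (h1 : 1 ≤ k) (h2 : k + 1 ≤ n) :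
    maxAssign n w k ≥ (maxAssign n w (k - 1) + maxAssign n w (k + 1)) / 2 := by
  obtain ⟨A, hA, hAc, hwA⟩ := exists_wSum_eq_maxAssign w (by omega : k - 1 ≤ n)
  obtain ⟨B, hB, hBc, hwB⟩ := exists_wSum_eq_maxAssign w h2
  obtain ⟨C, D, hC, hD, hCc, hDc, hCD⟩ :=
    (isMatching_iff_isBipartiteMatching.1 hA).exists_recombination
      (isMatching_iff_isBipartiteMatching.1 hB) (by omega)
  have hwC := wSum_le_maxAssign w (isMatching_iff_isBipartiteMatching.2 hC) (k := k) (by omega)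
  have hwD := wSum_le_maxAssign w (isMatching_iff_isBipartiteMatching.2 hD) (k := k) (by omega)
  have hsum : wSum n w C + wSum n w D = wSum n w A + wSum n w B :=
    Finset.sum_add_sum_eq_of_val_add_eq _ hCD
  linarith
end

section
/- Let M_{k−1} and M_{k+1} be maximum-weight matchings of cardinalities k−1 and k+1 in a weighted complete bipartite graph K_{n,n}, chosen so that their symmetric difference is the disjoint union of two augmenting paths p_1 and p_2 with respect to M_{k−1}. If g_i = w(p_i ∩ M_{k+1}) − w(p_i ∩ M_{k−1}) and g_1 ≥ g_2, then M_{k−1} △ p_1 is a matching of cardinality k whose weight is at least (ω_{k−1} + ω_{k+1})/2, where ω_j denotes the maximal weight of a j-matching. -/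
/-- if the symmetric difference of optimal (k-1)- and (k+1)-matchings is a
disjoint union of two augmenting paths with gains g₁ ≥ g₂, then `M₁ △ p₁` is a k-matching of
weight at least (ω_{k-1} + ω_{k+1})/2. -/
theorem stmt2 (n k : ℕ) (hk : 1 ≤ k) (hkn : k + 1 ≤ n) (w : Fin n → Fin n → ℝ)
    (M1 M2 p1 p2 : Finset (Fin n × Fin n))
    (hM1 : IsMatching n M1) (hc1 : M1.card = k - 1)
    (hopt1 : ∀ N, IsMatching n N → N.card = k - 1 → wSum n w N ≤ wSum n w M1)
    (hM2 : IsMatching n M2) (hc2 : M2.card = k + 1)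
    (hopt2 : ∀ N, IsMatching n N → N.card = k + 1 → wSum n w N ≤ wSum n w M2)
    (hp1 : IsAugmentingPath n M1 p1) (hp2 : IsAugmentingPath n M1 p2)
    (hdisj : Disjoint p1 p2)
    (hsd : symmDiff M1 M2 = p1 ∪ p2)
    (hg : wSum n w (p2 ∩ M2) - wSum n w (p2 ∩ M1) ≤
          wSum n w (p1 ∩ M2) - wSum n w (p1 ∩ M1)) :
    IsMatching n (symmDiff M1 p1) ∧ (symmDiff M1 p1).card = k ∧
      (maxAssign n w (k - 1) + maxAssign n w (k + 1)) / 2 ≤ wSum n w (symmDiff M1 p1) := by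
  classical
  obtain ⟨t, u, v, hu, hv, hnm, hm, hex1, hex2, hpeq⟩ := hp1
  set A : Finset (Fin n × Fin n) := (Finset.range (t+1)).image fun i => (u i, v i) with hA
  set B : Finset (Fin n × Fin n) := (Finset.range t).image fun i => (u (i+1), v i) with hB
  have hAmem : ∀ e, e ∈ A ↔ ∃ i ≤ t, (u i, v i) = e := by
    intro e
    constructor
    · intro h
      obtain ⟨i, hi, heq⟩ := Finset.mem_image.1 h
      exact ⟨i, Nat.lt_succ_iff.1 (Finset.mem_range.1 hi), heq⟩
    · rintro ⟨i, hi, rfl⟩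
      exact Finset.mem_image.2 ⟨i, Finset.mem_range.2 (Nat.lt_succ_of_le hi), rfl⟩
  have hBmem : ∀ e, e ∈ B ↔ ∃ i < t, (u (i+1), v i) = e := by
    intro e
    constructor
    · intro h
      obtain ⟨i, hi, heq⟩ := Finset.mem_image.1 h
      exact ⟨i, Finset.mem_range.1 hi, heq⟩
    · rintro ⟨i, hi, rfl⟩
      exact Finset.mem_image.2 ⟨i, Finset.mem_range.2 hi, rfl⟩
  have hBsub : B ⊆ M1 := by
    intro e he
    obtain ⟨i, hi, rfl⟩ := (hBmem e).1 he
    exact hm i hi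
  have hAM1 : ∀ e ∈ A, e ∉ M1 := by
    intro e he
    obtain ⟨i, hi, rfl⟩ := (hAmem e).1 he
    exact hnm i hi
  have hp1M1 : p1 ∩ M1 = B := by
    ext e
    simp only [Finset.mem_inter, hpeq, Finset.mem_union]
    constructor
    · rintro ⟨hAB, hM⟩
      rcases hAB with h | h
      · exact absurd hM (hAM1 e h)
      · exact h
    · intro h; exact ⟨Or.inr h, hBsub h⟩
  have hp1dM1 : p1 \ M1 = A := by
    ext e
    simp only [Finset.mem_sdiff, hpeq, Finset.mem_union]
    constructor
    · rintro ⟨hAB, hM⟩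
      rcases hAB with h | h
      · exact h
      · exact absurd (hBsub h) hM
    · intro h; exact ⟨Or.inl h, hAM1 e h⟩
  have cardA : A.card = t + 1 := by
    rw [hA, Finset.card_image_of_injOn, Finset.card_range]
    intro i hi j hj hij
    simp only [Finset.coe_range, Set.mem_Iio] at hi hj
    exact hu i (by omega) j (by omega) (congrArg Prod.fst hij)
  have cardB : B.card = t := by
    rw [hB, Finset.card_image_of_injOn, Finset.card_range]
    intro i hi j hj hij
    simp only [Finset.coe_range, Set.mem_Iio] at hi hj
    exact hv i (by omega) j (by omega) (congrArg Prod.snd hij)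
  have hM1B : M1 \ p1 = M1 \ B := by
    ext e
    simp only [Finset.mem_sdiff, hpeq, Finset.mem_union]
    constructor
    · rintro ⟨hM, h⟩; exact ⟨hM, fun hb => h (Or.inr hb)⟩
    · rintro ⟨hM, h⟩
      refine ⟨hM, ?_⟩
      rintro (ha | hb)
      · exact hAM1 e ha hM
      · exact h hb
  have hsd1 : symmDiff M1 p1 = (M1 \ B) ∪ A := by
    ext e
    rw [Finset.mem_symmDiff]
    simp only [Finset.mem_union, Finset.mem_sdiff]
    constructor
    · rintro (⟨hM, hp⟩ | ⟨hp, hM⟩)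
      · exact Or.inl ⟨hM, fun hb => hp (by rw [hpeq]; exact Finset.mem_union_right _ hb)⟩
      · right; rw [← hp1dM1]; exact Finset.mem_sdiff.2 ⟨hp, hM⟩
    · rintro (⟨hM, hb⟩ | ha)
      · left
        refine ⟨hM, ?_⟩
        rw [hpeq]
        intro h
        rcases Finset.mem_union.1 h with h | h
        · exact hAM1 e h hM
        · exact hb h
      · right
        refine ⟨by rw [hpeq]; exact Finset.mem_union_left _ ha, hAM1 e ha⟩
  have hdisjMA : Disjoint (M1 \ B) A := by
    rw [Finset.disjoint_left]
    intro e he ha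
    exact hAM1 e ha (Finset.mem_sdiff.1 he).1
  have htk : t ≤ k - 1 := by
    have := Finset.card_le_card hBsub
    rw [cardB, hc1] at this; exact this
  -- mixed case lemma for matching
  have hmix : ∀ e ∈ M1 \ B, ∀ i ≤ t, e.1 ≠ u i ∧ e.2 ≠ v i := by
    intro e he i hi
    obtain ⟨heM, heB⟩ := Finset.mem_sdiff.1 he
    constructor
    · intro h1
      cases i with
      | zero => exact hex1 e heM h1
      | succ j =>
        have hjt : j < t := by omega
        have hf : (u (j+1), v j) ∈ M1 := hm j hjt
        have hne : e ≠ (u (j+1), v j) := by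
          intro h; apply heB; rw [h, hBmem]; exact ⟨j, hjt, rfl⟩
        exact (hM1 e heM _ hf hne).1 h1
    · intro h2
      by_cases hit : i = t
      · exact hex2 e heM (hit ▸ h2)
      · have hit' : i < t := lt_of_le_of_ne hi hit
        have hf : (u (i+1), v i) ∈ M1 := hm i hit'
        have hne : e ≠ (u (i+1), v i) := by
          intro h; apply heB; rw [h, hBmem]; exact ⟨i, hit', rfl⟩
        exact (hM1 e heM _ hf hne).2 h2
  have hmatch : IsMatching n (symmDiff M1 p1) := by
    rw [hsd1]
    intro e he f hf hef
    rcases Finset.mem_union.1 he with he' | he' <;>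
      rcases Finset.mem_union.1 hf with hf' | hf'
    · exact hM1 e (Finset.mem_sdiff.1 he').1 f (Finset.mem_sdiff.1 hf').1 hef
    · obtain ⟨i, hi, rfl⟩ := (hAmem f).1 hf'
      exact hmix e he' i hi
    · obtain ⟨i, hi, rfl⟩ := (hAmem e).1 he'
      have := hmix f hf' i hi
      exact ⟨(this.1).symm, (this.2).symm⟩
    · obtain ⟨i, hi, rfl⟩ := (hAmem e).1 he'
      obtain ⟨j, hj, rfl⟩ := (hAmem f).1 hf'
      have hij : i ≠ j := by rintro rfl; exact hef rfl
      constructor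
      · intro h; exact hij (hu i hi j hj h)
      · intro h; exact hij (hv i hi j hj h)
  have hcard : (symmDiff M1 p1).card = k := by
    rw [hsd1, Finset.card_union_of_disjoint hdisjMA, Finset.card_sdiff_of_subset hBsub,
      cardA, cardB, hc1]
    omega
  -- weight computations
  have hwsd : wSum n w (symmDiff M1 p1) =
      wSum n w M1 - wSum n w (p1 ∩ M1) + wSum n w (p1 ∩ M2) := by
    have hA2 : p1 ∩ M2 = A := by
      rw [← hp1dM1]
      ext e
      simp only [Finset.mem_inter, Finset.mem_sdiff]
      have hkey : e ∈ p1 → (e ∈ symmDiff M1 M2) := by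
        intro h; rw [hsd]; exact Finset.mem_union_left _ h
      constructor
      · rintro ⟨hp, hM2⟩
        refine ⟨hp, fun hM1' => ?_⟩
        rcases Finset.mem_symmDiff.1 (hkey hp) with ⟨_, h⟩ | ⟨_, h⟩
        · exact h hM2
        · exact h hM1'
      · rintro ⟨hp, hM1'⟩
        refine ⟨hp, ?_⟩
        rcases Finset.mem_symmDiff.1 (hkey hp) with ⟨h, _⟩ | ⟨h, _⟩
        · exact absurd h hM1'
        · exact h
    rw [hsd1, hp1M1, hA2]
    unfold wSum
    rw [Finset.sum_union hdisjMA]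
    have := Finset.sum_sdiff (f := fun e : Fin n × Fin n => w e.1 e.2) hBsub
    linarith
  have hdiff : wSum n w M2 - wSum n w M1 =
      (wSum n w (p1 ∩ M2) - wSum n w (p1 ∩ M1)) +
      (wSum n w (p2 ∩ M2) - wSum n w (p2 ∩ M1)) := by
    have h21 : M2 \ M1 = (p1 ∩ M2) ∪ (p2 ∩ M2) := by
      ext e
      have hkey : e ∈ p1 ∪ p2 ↔ e ∈ symmDiff M1 M2 := by rw [hsd]
      simp only [Finset.mem_union, Finset.mem_symmDiff] at hkey
      simp only [Finset.mem_sdiff, Finset.mem_union, Finset.mem_inter]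
      tauto
    have h12 : M1 \ M2 = (p1 ∩ M1) ∪ (p2 ∩ M1) := by
      ext e
      have hkey : e ∈ p1 ∪ p2 ↔ e ∈ symmDiff M1 M2 := by rw [hsd]
      simp only [Finset.mem_union, Finset.mem_symmDiff] at hkey
      simp only [Finset.mem_sdiff, Finset.mem_union, Finset.mem_inter]
      tauto
    have hd2 : Disjoint (p1 ∩ M2) (p2 ∩ M2) :=
      Finset.disjoint_of_subset_left Finset.inter_subset_left
        (Finset.disjoint_of_subset_right Finset.inter_subset_left hdisj)
    have hd1 : Disjoint (p1 ∩ M1) (p2 ∩ M1) :=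
      Finset.disjoint_of_subset_left Finset.inter_subset_left
        (Finset.disjoint_of_subset_right Finset.inter_subset_left hdisj)
    have e2 := Finset.sum_inter_add_sum_sdiff M2 M1 (fun e : Fin n × Fin n => w e.1 e.2)
    have e1 := Finset.sum_inter_add_sum_sdiff M1 M2 (fun e : Fin n × Fin n => w e.1 e.2)
    have hcomm : M2 ∩ M1 = M1 ∩ M2 := Finset.inter_comm _ _
    unfold wSum
    rw [← e2, ← e1, h21, h12, Finset.sum_union hd2, Finset.sum_union hd1, hcomm]
    ring
  -- sup bounds
  have hS1 : maxAssign n w (k - 1) ≤ wSum n w M1 := by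
    unfold maxAssign
    apply csSup_le
    · exact ⟨wSum n w M1, ⟨M1, hM1, hc1, rfl⟩⟩
    · rintro x ⟨N, hN, hNc, rfl⟩
      exact hopt1 N hN hNc
  have hS2 : maxAssign n w (k + 1) ≤ wSum n w M2 := by
    unfold maxAssign
    apply csSup_le
    · exact ⟨wSum n w M2, ⟨M2, hM2, hc2, rfl⟩⟩
    · rintro x ⟨N, hN, hNc, rfl⟩
      exact hopt2 N hN hNc
  exact ⟨hmatch, hcard, by linarith⟩
end

section
/- Let W be an n×n matrix over ℝ ∪ {−∞}, and let a_k (for k = 0,...,n) be the maximal value of a max-plus permanent of a k×k submatrix of W (equivalently, the optimal value of the k-cardinality assignment problem with weight matrix W, with a_0 = 0). Then the coefficient of x^{n−k} in the full characteristic maxpolynomial χ̄_W(x) = maxperm(x·0̄ ⊕ W) equals a_k, where 0̄ is the all-zeros matrix and x·0̄ ⊕ W means each entry is max(x, w_ij). -/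
/-- Maximal value of a k-cardinality assignment (max over k×k maxpermanent minors) of a
matrix over ℝ ∪ {−∞}; for k = 0 this is 0. -/
noncomputable def assignE (n : ℕ) (W : Matrix (Fin n) (Fin n) EReal) (k : ℕ) : EReal :=
  sSup {x : EReal | ∃ f g : Fin k → Fin n,
    Function.Injective f ∧ Function.Injective g ∧ x = ∑ i, W (f i) (g i)}

/-- the coefficient of x^{n−k} in the full characteristic maxpolynomial
maxperm(x·0̄ ⊕ W) — namely the max over permutations σ and k-subsets S of rows of
Σ_{i∈S} w_{iσ(i)} — equals the optimal k-assignment value of W. -/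
theorem stmt9 (n : ℕ) (W : Matrix (Fin n) (Fin n) EReal) :
    ∀ k ≤ n,
      (⨆ σ : Equiv.Perm (Fin n), ⨆ S ∈ {S : Finset (Fin n) | S.card = k},
        ∑ i ∈ S, W i (σ i)) = assignE n W k := by
  classical
  intro k hk
  apply le_antisymm
  · apply iSup_le; intro σ
    apply iSup_le; intro S
    apply iSup_le; intro hS
    simp only [Set.mem_setOf_eq] at hS
    apply le_sSup
    set e : {x // x ∈ S} ≃ Fin k := S.equivFinOfCardEq hS with he
    refine ⟨fun i => ((e.symm i : {x // x ∈ S}) : Fin n),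
      σ ∘ (fun i => ((e.symm i : {x // x ∈ S}) : Fin n)), ?_, ?_, ?_⟩
    · exact Subtype.coe_injective.comp e.symm.injective
    · exact σ.injective.comp (Subtype.coe_injective.comp e.symm.injective)
    · have h1 : ∑ i : Fin k, W ((e.symm i : {x // x ∈ S}) : Fin n)
          (σ ((e.symm i : {x // x ∈ S}) : Fin n))
          = ∑ x : {x // x ∈ S}, W (x : Fin n) (σ (x : Fin n)) :=
        Equiv.sum_comp e.symm (fun x : {x // x ∈ S} => W (x : Fin n) (σ (x : Fin n)))
      rw [Function.comp_def, h1, Finset.sum_coe_sort S (fun a => W a (σ a))]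
  · apply sSup_le
    rintro x ⟨f, g, hf, hg, rfl⟩
    set e : {x // x ∈ Set.range f} ≃ {x // x ∈ Set.range g} :=
      (Equiv.ofInjective f hf).symm.trans (Equiv.ofInjective g hg) with he
    set σ : Equiv.Perm (Fin n) := e.extendSubtype with hσ
    have key : ∀ i, σ (f i) = g i := by
      intro i
      have h1 := Equiv.extendSubtype_apply_of_mem e (f i) ⟨i, rfl⟩
      rw [hσ, h1, he]
      simp only [Equiv.trans_apply]
      have h2 : (⟨f i, ⟨i, rfl⟩⟩ : {x // x ∈ Set.range f}) = Equiv.ofInjective f hf i := rfl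
      rw [h2, Equiv.symm_apply_apply]
      rfl
    refine le_iSup_of_le σ (le_iSup₂_of_le (Finset.univ.image f) ?_ ?_)
    · simp [Set.mem_setOf_eq, Finset.card_image_of_injective _ hf]
    · rw [Finset.sum_image (fun a _ b _ h => hf h)]
      apply le_of_eq
      exact Finset.sum_congr rfl (fun i _ => by rw [key i])
end

section
/- Let W be an n×n real matrix and let a_k denote the maximal weight of a k-cardinality assignment in W (sum of k entries, no two sharing a row or column), with a_0 = 0. Then the full characteristic maxpolynomial χ̄_W(x) = ⊕_{k=0}^n a_k x^{n−k} is in full canonical form; in particular, the sequence a_0, a_1, ..., a_n is concave: a_k ≥ (a_{k−1} + a_{k+1})/2 for 1 ≤ k ≤ n−1. -/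
namespace Stmt10Aux

variable {n : ℕ}

/-- A partial matching: a set of cells no two of which share a row or a column. -/
def Mtch (M : Finset (Fin n × Fin n)) : Prop :=
  ∀ p ∈ M, ∀ q ∈ M, p.1 = q.1 ∨ p.2 = q.2 → p = q

lemma Mtch.subset {M N : Finset (Fin n × Fin n)} (h : Mtch N) (hs : M ⊆ N) : Mtch M :=
  fun p hp q hq hpq => h p (hs hp) q (hs hq) hpq

lemma Mtch.insert {M : Finset (Fin n × Fin n)} (h : Mtch M) {e : Fin n × Fin n}
    (he : ∀ p ∈ M, p.1 ≠ e.1 ∧ p.2 ≠ e.2) : Mtch (insert e M) := by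
  intro p hp q hq hpq
  rcases Finset.mem_insert.1 hp with hp1 | hp1 <;> rcases Finset.mem_insert.1 hq with hq1 | hq1
  · rw [hp1, hq1]
  · rw [hp1] at hpq
    rcases hpq with h1 | h2
    · exact absurd h1.symm (he q hq1).1
    · exact absurd h2.symm (he q hq1).2
  · rw [hq1] at hpq
    rcases hpq with h1 | h2
    · exact absurd h1 (he p hp1).1
    · exact absurd h2 (he p hp1).2
  · exact h p hp1 q hq1 hpq

lemma Mtch.union {M N : Finset (Fin n × Fin n)} (hM : Mtch M) (hN : Mtch N)
    (hc : ∀ p ∈ M, ∀ q ∈ N, p.1 ≠ q.1 ∧ p.2 ≠ q.2) : Mtch (M ∪ N) := by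
  intro p hp q hq hpq
  rcases Finset.mem_union.1 hp with hp | hp <;> rcases Finset.mem_union.1 hq with hq | hq
  · exact hM p hp q hq hpq
  · rcases hpq with h1 | h2
    · exact absurd h1 (hc p hp q hq).1
    · exact absurd h2 (hc p hp q hq).2
  · rcases hpq with h1 | h2
    · exact absurd h1.symm (hc q hq p hp).1
    · exact absurd h2.symm (hc q hq p hp).2
  · exact hN p hp q hq hpq

/-- Weight of a matching. -/
noncomputable def wt (W : Fin n → Fin n → ℝ) (M : Finset (Fin n × Fin n)) : ℝ :=
  ∑ p ∈ M, W p.1 p.2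

lemma wt_union (W : Fin n → Fin n → ℝ) {M N : Finset (Fin n × Fin n)} (h : Disjoint M N) :
    wt W (M ∪ N) = wt W M + wt W N :=
  Finset.sum_union h

/-- The easy rebalancing case: an edge of `M` whose row and column are both free in `N`. -/
lemma case1 {M N : Finset (Fin n × Fin n)} (hM : Mtch M) (hN : Mtch N)
    (hd : Disjoint M N) {e : Fin n × Fin n} (heM : e ∈ M)
    (hr : ∀ p ∈ N, p.1 ≠ e.1) (hc : ∀ p ∈ N, p.2 ≠ e.2) :
    ∃ P Q, Mtch P ∧ Mtch Q ∧ Disjoint P Q ∧ P ∪ Q = M ∪ N ∧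
      P.card = M.card - 1 ∧ Q.card = N.card + 1 := by
  have heN : e ∉ N := fun h => (hr e h) rfl
  refine ⟨M.erase e, insert e N, hM.subset (Finset.erase_subset _ _),
    hN.insert (fun p hp => ⟨hr p hp, hc p hp⟩), ?_, ?_, ?_, ?_⟩
  · rw [Finset.disjoint_left]
    intro p hp hq
    rcases Finset.mem_insert.1 hq with rfl | hq
    · exact (Finset.mem_erase.1 hp).1 rfl
    · exact Finset.disjoint_left.1 hd (Finset.mem_erase.1 hp).2 hq
  · rw [Finset.union_insert, ← Finset.insert_union, Finset.insert_erase heM]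
  · exact Finset.card_erase_of_mem heM
  · exact Finset.card_insert_of_notMem heN

/-- Main exchange lemma for disjoint matchings: if `|N| < |M|`, the edges of `M ∪ N` can be
repartitioned into matchings of sizes `|M| - 1` and `|N| + 1`. -/
lemma exchange_disjoint :
    ∀ (q : ℕ) (M N : Finset (Fin n × Fin n)), N.card ≤ q → Mtch M → Mtch N →
      Disjoint M N → N.card < M.card →
      ∃ P Q, Mtch P ∧ Mtch Q ∧ Disjoint P Q ∧ P ∪ Q = M ∪ N ∧
        P.card = M.card - 1 ∧ Q.card = N.card + 1 := by
  intro q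
  induction q with
  | zero =>
    intro M N hq hM hN hd hlt
    have hN0 : N = ∅ := Finset.card_eq_zero.1 (Nat.le_zero.1 hq)
    subst hN0
    obtain ⟨e, heM⟩ := Finset.card_pos.1 hlt
    exact case1 hM hN hd heM (by simp) (by simp)
  | succ q ih =>
    intro M N hq hM hN hd hlt
    -- find a row of M not used by N
    have hrowM : (M.image Prod.fst).card = M.card :=
      Finset.card_image_of_injOn (fun p hp q' hq' h => hM p hp q' hq' (Or.inl h))
    have hrowN : (N.image Prod.fst).card ≤ N.card := Finset.card_image_le
    have hns : ¬ (M.image Prod.fst ⊆ N.image Prod.fst) := fun hsub =>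
      absurd (Finset.card_le_card hsub) (by omega)
    obtain ⟨r, hrM, hrN⟩ := Finset.not_subset.1 hns
    obtain ⟨e, heM, her⟩ := Finset.mem_image.1 hrM
    have hr : ∀ p ∈ N, p.1 ≠ e.1 := fun p hp h =>
      hrN (Finset.mem_image.2 ⟨p, hp, by rw [h, her]⟩)
    by_cases hc : ∀ p ∈ N, p.2 ≠ e.2
    · exact case1 hM hN hd heM hr hc
    · push_neg at hc
      obtain ⟨e', he'N, hce⟩ := hc
      have heN : e ∉ N := Finset.disjoint_left.1 hd heM
      have he'M : e' ∉ M := Finset.disjoint_right.1 hd he'N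
      have hee' : e' ≠ e := fun h => heN (h ▸ he'N)
      have hre' : e'.1 ≠ e.1 := hr e' he'N
      set M' := M.erase e with hM'def
      set N' := N.erase e' with hN'def
      have hM' : Mtch M' := hM.subset (Finset.erase_subset _ _)
      have hN' : Mtch N' := hN.subset (Finset.erase_subset _ _)
      have hd' : Disjoint M' N' :=
        hd.mono (Finset.erase_subset _ _) (Finset.erase_subset _ _)
      have hcardM' : M'.card = M.card - 1 := Finset.card_erase_of_mem heM
      have hcardN' : N'.card = N.card - 1 := Finset.card_erase_of_mem he'N
      have hNpos : 1 ≤ N.card := Finset.card_pos.2 ⟨e', he'N⟩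
      obtain ⟨P', Q', hP', hQ', hdPQ, hun, hcP, hcQ⟩ :=
        ih M' N' (by omega) hM' hN' hd' (by omega)
      -- basic freeness facts
      have hnotM' : e ∉ M' ∪ N' := by
        intro h
        rcases Finset.mem_union.1 h with h | h
        · exact (Finset.mem_erase.1 h).1 rfl
        · exact heN (Finset.mem_of_mem_erase h)
      have hnotN' : e' ∉ M' ∪ N' := by
        intro h
        rcases Finset.mem_union.1 h with h | h
        · exact he'M (Finset.mem_of_mem_erase h)
        · exact (Finset.mem_erase.1 h).1 rfl
      have hfree_r : ∀ p ∈ M' ∪ N', p.1 ≠ e.1 := by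
        intro p hp h
        rcases Finset.mem_union.1 hp with hp | hp
        · obtain ⟨hpe, hpM⟩ := Finset.mem_erase.1 hp
          exact hpe (hM p hpM e heM (Or.inl h))
        · exact hr p (Finset.mem_of_mem_erase hp) h
      have hfree_c : ∀ p ∈ M' ∪ N', p.2 ≠ e.2 := by
        intro p hp h
        rcases Finset.mem_union.1 hp with hp | hp
        · obtain ⟨hpe, hpM⟩ := Finset.mem_erase.1 hp
          exact hpe (hM p hpM e heM (Or.inr h))
        · obtain ⟨hpe, hpN⟩ := Finset.mem_erase.1 hp
          exact hpe (hN p hpN e' he'N (Or.inr (h.trans hce.symm)))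
      have hrow' : ∀ p ∈ M' ∪ N', ∀ q' ∈ M' ∪ N', p.1 = e'.1 → q'.1 = e'.1 → p = q' := by
        intro p hp q' hq' hp1 hq1
        have hmem : ∀ s ∈ M' ∪ N', s.1 = e'.1 → s ∈ M' := by
          intro s hs hs1
          rcases Finset.mem_union.1 hs with hs | hs
          · exact hs
          · obtain ⟨hse, hsN⟩ := Finset.mem_erase.1 hs
            exact absurd (hN s hsN e' he'N (Or.inl hs1)) hse
        exact hM p (Finset.mem_of_mem_erase (hmem p hp hp1)) q'
          (Finset.mem_of_mem_erase (hmem q' hq' hq1)) (Or.inl (hp1.trans hq1.symm))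
      have hsubP : P' ⊆ M' ∪ N' := hun ▸ Finset.subset_union_left
      have hsubQ : Q' ⊆ M' ∪ N' := hun ▸ Finset.subset_union_right
      have heP' : e ∉ P' := fun h => hnotM' (hsubP h)
      have heQ' : e ∉ Q' := fun h => hnotM' (hsubQ h)
      have he'P' : e' ∉ P' := fun h => hnotN' (hsubP h)
      have he'Q' : e' ∉ Q' := fun h => hnotN' (hsubQ h)
      have hMN : M ∪ N = insert e (insert e' (M' ∪ N')) := by
        rw [hM'def, hN'def]
        ext p
        simp only [Finset.mem_union, Finset.mem_insert, Finset.mem_erase]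
        constructor
        · rintro (hp | hp)
          · by_cases hpe : p = e
            · exact Or.inl hpe
            · exact Or.inr (Or.inr (Or.inl ⟨hpe, hp⟩))
          · by_cases hpe : p = e'
            · exact Or.inr (Or.inl hpe)
            · exact Or.inr (Or.inr (Or.inr ⟨hpe, hp⟩))
        · rintro (rfl | rfl | ⟨_, hp⟩ | ⟨_, hp⟩)
          · exact Or.inl heM
          · exact Or.inr he'N
          · exact Or.inl hp
          · exact Or.inr hp
      have hM2 : 2 ≤ M.card := by omega
      by_cases hPfree : ∀ p ∈ P', p.1 ≠ e'.1
      · -- e' joins P', e joins Q'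
        refine ⟨insert e' P', insert e Q', ?_, ?_, ?_, ?_, ?_, ?_⟩
        · exact hP'.insert (fun p hp => ⟨hPfree p hp, fun h => hfree_c p (hsubP hp) (h.trans hce)⟩)
        · exact hQ'.insert (fun p hp => ⟨hfree_r p (hsubQ hp), hfree_c p (hsubQ hp)⟩)
        · rw [Finset.disjoint_left]
          intro p hp hq
          rcases Finset.mem_insert.1 hp with rfl | hp
          · rcases Finset.mem_insert.1 hq with h | hq
            · exact hee' h
            · exact he'Q' hq
          · rcases Finset.mem_insert.1 hq with rfl | hq
            · exact heP' hp
            · exact Finset.disjoint_left.1 hdPQ hp hq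
        · rw [Finset.insert_union, Finset.union_insert, hun, hMN, Finset.insert_comm]
        · rw [Finset.card_insert_of_notMem he'P', hcP]
          omega
        · rw [Finset.card_insert_of_notMem heQ', hcQ]
          omega
      · -- the (unique) edge at row e'.1 lies in P'; so e joins P', e' joins Q'
        push_neg at hPfree
        obtain ⟨p₀, hp₀P, hp₀r⟩ := hPfree
        have hQfree : ∀ p ∈ Q', p.1 ≠ e'.1 := by
          intro p hp h
          have : p₀ = p := hrow' p₀ (hsubP hp₀P) p (hsubQ hp) hp₀r h
          exact Finset.disjoint_left.1 hdPQ hp₀P (this ▸ hp)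
        refine ⟨insert e P', insert e' Q', ?_, ?_, ?_, ?_, ?_, ?_⟩
        · exact hP'.insert (fun p hp => ⟨hfree_r p (hsubP hp), hfree_c p (hsubP hp)⟩)
        · exact hQ'.insert (fun p hp => ⟨hQfree p hp, fun h => hfree_c p (hsubQ hp) (h.trans hce)⟩)
        · rw [Finset.disjoint_left]
          intro p hp hq
          rcases Finset.mem_insert.1 hp with rfl | hp
          · rcases Finset.mem_insert.1 hq with h | hq
            · exact hee' h.symm
            · exact heQ' hq
          · rcases Finset.mem_insert.1 hq with rfl | hq
            · exact he'P' hp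
            · exact Finset.disjoint_left.1 hdPQ hp hq
        · rw [Finset.insert_union, Finset.union_insert, hun, hMN]
        · rw [Finset.card_insert_of_notMem heP', hcP]
          omega
        · rw [Finset.card_insert_of_notMem he'Q', hcQ]
          omega

/-- Weighted exchange lemma for general matchings. -/
lemma exchange (W : Fin n → Fin n → ℝ) (M N : Finset (Fin n × Fin n))
    (hM : Mtch M) (hN : Mtch N) (hlt : N.card < M.card) :
    ∃ P Q, Mtch P ∧ Mtch Q ∧ P.card = M.card - 1 ∧ Q.card = N.card + 1 ∧
      wt W P + wt W Q = wt W M + wt W N := by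
  set K := M ∩ N with hK
  set M₀ := M \ N with hM₀
  set N₀ := N \ M with hN₀
  have hMK : M₀ ∪ K = M := Finset.sdiff_union_inter M N
  have hNK : N₀ ∪ K = N := by rw [hK, Finset.inter_comm]; exact Finset.sdiff_union_inter N M
  have hdMK : Disjoint M₀ K := Finset.disjoint_sdiff_inter M N
  have hdNK : Disjoint N₀ K := by rw [hK, Finset.inter_comm]; exact Finset.disjoint_sdiff_inter N M
  have hcM : M₀.card + K.card = M.card := by rw [← Finset.card_union_of_disjoint hdMK, hMK]
  have hcN : N₀.card + K.card = N.card := by rw [← Finset.card_union_of_disjoint hdNK, hNK]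
  have hM₀m : Mtch M₀ := hM.subset (Finset.sdiff_subset)
  have hN₀m : Mtch N₀ := hN.subset (Finset.sdiff_subset)
  have hd₀ : Disjoint M₀ N₀ := disjoint_sdiff_sdiff
  obtain ⟨P₀, Q₀, hP₀, hQ₀, hdPQ, hun, hcP₀, hcQ₀⟩ :=
    exchange_disjoint N₀.card M₀ N₀ le_rfl hM₀m hN₀m hd₀ (by omega)
  have hsubP : P₀ ⊆ M₀ ∪ N₀ := hun ▸ Finset.subset_union_left
  have hsubQ : Q₀ ⊆ M₀ ∪ N₀ := hun ▸ Finset.subset_union_right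
  -- edges of M₀ ∪ N₀ are compatible with (disjoint from rows/cols of) edges of K
  have hcross : ∀ p ∈ M₀ ∪ N₀, ∀ q ∈ K, p.1 ≠ q.1 ∧ p.2 ≠ q.2 := by
    intro p hp q hq
    have hqM : q ∈ M := (Finset.mem_inter.1 hq).1
    have hqN : q ∈ N := (Finset.mem_inter.1 hq).2
    rcases Finset.mem_union.1 hp with hp | hp
    · obtain ⟨hpM, hpN⟩ := Finset.mem_sdiff.1 hp
      constructor
      · intro h; exact hpN ((hM p hpM q hqM (Or.inl h)) ▸ hqN)
      · intro h; exact hpN ((hM p hpM q hqM (Or.inr h)) ▸ hqN)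
    · obtain ⟨hpN, hpM⟩ := Finset.mem_sdiff.1 hp
      constructor
      · intro h; exact hpM ((hN p hpN q hqN (Or.inl h)) ▸ hqM)
      · intro h; exact hpM ((hN p hpN q hqN (Or.inr h)) ▸ hqM)
  have hKm : Mtch K := hM.subset (Finset.inter_subset_left)
  have hdP₀K : Disjoint P₀ K := Finset.disjoint_left.2 (fun p hp hq =>
    (hcross p (hsubP hp) p hq).1 rfl)
  have hdQ₀K : Disjoint Q₀ K := Finset.disjoint_left.2 (fun p hp hq =>
    (hcross p (hsubQ hp) p hq).1 rfl)
  have hM₀pos : 1 ≤ M₀.card := by omega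
  refine ⟨P₀ ∪ K, Q₀ ∪ K,
    hP₀.union hKm (fun p hp q hq => hcross p (hsubP hp) q hq),
    hQ₀.union hKm (fun p hp q hq => hcross p (hsubQ hp) q hq), ?_, ?_, ?_⟩
  · rw [Finset.card_union_of_disjoint hdP₀K, hcP₀]; omega
  · rw [Finset.card_union_of_disjoint hdQ₀K, hcQ₀]; omega
  · have h1 : wt W P₀ + wt W Q₀ = wt W M₀ + wt W N₀ := by
      rw [← wt_union W hdPQ, ← wt_union W hd₀, hun]
    rw [wt_union W hdP₀K, wt_union W hdQ₀K, ← hMK, ← hNK, wt_union W hdMK, wt_union W hdNK]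
    linarith

/-- Bridge: the set in the statement is the set of weights of matchings of cardinality `k`. -/
lemma S_eq (W : Fin n → Fin n → ℝ) (k : ℕ) :
    {x : ℝ | ∃ f g : Fin k → Fin n,
        Function.Injective f ∧ Function.Injective g ∧ x = ∑ i, W (f i) (g i)}
      = {x : ℝ | ∃ M, Mtch M ∧ M.card = k ∧ wt W M = x} := by
  ext x
  constructor
  · rintro ⟨f, g, hf, hg, rfl⟩
    have hpair : Function.Injective (fun i : Fin k => (f i, g i)) := by
      intro i j h
      exact hf (congrArg Prod.fst h)
    refine ⟨Finset.image (fun i => (f i, g i)) Finset.univ, ?_, ?_, ?_⟩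
    · intro p hp q hq hpq
      obtain ⟨i, _, rfl⟩ := Finset.mem_image.1 hp
      obtain ⟨j, _, rfl⟩ := Finset.mem_image.1 hq
      rcases hpq with h | h
      · exact congrArg (fun i => (f i, g i)) (hf h)
      · exact congrArg (fun i => (f i, g i)) (hg h)
    · rw [Finset.card_image_of_injective _ hpair, Finset.card_univ, Fintype.card_fin]
    · rw [wt, Finset.sum_image (fun i _ j _ h => hpair h)]
  · rintro ⟨M, hM, hk, rfl⟩
    subst hk
    set E := M.equivFin with hE
    refine ⟨fun i => ((E.symm i) : Fin n × Fin n).1, fun i => ((E.symm i) : Fin n × Fin n).2,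
      ?_, ?_, ?_⟩
    · intro i j h
      have := hM _ (E.symm i).2 _ (E.symm j).2 (Or.inl h)
      exact E.symm.injective (Subtype.ext this)
    · intro i j h
      have := hM _ (E.symm i).2 _ (E.symm j).2 (Or.inr h)
      exact E.symm.injective (Subtype.ext this)
    · rw [wt, ← Finset.sum_coe_sort M (fun p => W p.1 p.2)]
      exact (Equiv.sum_comp E.symm (fun p : {x // x ∈ M} => W (p : Fin n × Fin n).1
        (p : Fin n × Fin n).2)).symm

end Stmt10Aux

open Stmt10Aux in
/-- for a real n×n matrix W, the sequence of optimal k-assignment values aₖ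
(a₀ = 0) gives a full characteristic maxpolynomial ⊕ aₖ x^{n−k} in full canonical form
(each coefficient is aₖ = inf_x (p̂(x) − (n−k)x)); in particular the sequence is concave. -/
theorem stmt10 (n : ℕ) (W : Fin n → Fin n → ℝ) :
    let a : ℕ → ℝ := fun k => sSup {x : ℝ | ∃ f g : Fin k → Fin n,
      Function.Injective f ∧ Function.Injective g ∧ x = ∑ i, W (f i) (g i)}
    (∀ k ≤ n, a k =
      ⨅ x : ℝ, ((⨆ j : Fin (n + 1), (a j + ((n : ℝ) - (j : ℕ)) * x)) - ((n : ℝ) - k) * x)) ∧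
    (∀ k, 1 ≤ k → k ≤ n - 1 → (a (k - 1) + a (k + 1)) / 2 ≤ a k) := by
  intro a
  set S : ℕ → Set ℝ := fun k => {x : ℝ | ∃ f g : Fin k → Fin n,
      Function.Injective f ∧ Function.Injective g ∧ x = ∑ i, W (f i) (g i)} with hS
  have haS : ∀ k, a k = sSup (S k) := fun k => rfl
  -- boundedness
  have hbdd : ∀ k, BddAbove (S k) := by
    intro k
    refine ⟨∑ p : Fin n × Fin n, |W p.1 p.2|, ?_⟩
    rintro x ⟨f, g, hf, hg, rfl⟩
    have hpair : Function.Injective (fun i : Fin k => (f i, g i)) := by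
      intro i j h
      exact hf (congrArg Prod.fst h)
    calc ∑ i, W (f i) (g i) ≤ ∑ i, |W (f i) (g i)| :=
          Finset.sum_le_sum (fun i _ => le_abs_self _)
      _ = ∑ p ∈ Finset.image (fun i => (f i, g i)) Finset.univ, |W p.1 p.2| := by
          rw [Finset.sum_image (fun i _ j _ h => hpair h)]
      _ ≤ ∑ p : Fin n × Fin n, |W p.1 p.2| :=
          Finset.sum_le_sum_of_subset_of_nonneg (Finset.subset_univ _)
            (fun p _ _ => abs_nonneg _)
  -- nonemptiness below n
  have hne : ∀ k ≤ n, (S k).Nonempty := by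
    intro k hk
    exact ⟨∑ i : Fin k, W (Fin.castLE hk i) (Fin.castLE hk i),
      Fin.castLE hk, Fin.castLE hk, Fin.castLE_injective hk, Fin.castLE_injective hk, rfl⟩
  -- concavity
  have hconc : ∀ k, 1 ≤ k → k ≤ n - 1 → (a (k - 1) + a (k + 1)) / 2 ≤ a k := by
    intro k hk1 hkn
    have hn2 : 2 ≤ n := by omega
    have hsum : a (k + 1) + a (k - 1) ≤ a k + a k := by
      rw [haS, haS]
      have hne1 : (S (k + 1)).Nonempty := hne _ (by omega)
      have hne2 : (S (k - 1)).Nonempty := hne _ (by omega)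
      have key : ∀ x ∈ S (k + 1), ∀ y ∈ S (k - 1), x + y ≤ a k + a k := by
        intro x hx y hy
        have hSeq : ∀ m, S m = {x : ℝ | ∃ M, Mtch M ∧ M.card = m ∧ wt W M = x} :=
          fun m => S_eq W m
        rw [hSeq] at hx hy
        obtain ⟨M, hM, hMc, hMw⟩ := hx
        obtain ⟨N, hN, hNc, hNw⟩ := hy
        obtain ⟨P, Q, hP, hQ, hPc, hQc, hw⟩ := exchange W M N hM hN (by omega)
        have hPk : wt W P ∈ S k := by
          rw [hSeq]; exact ⟨P, hP, by omega, rfl⟩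
        have hQk : wt W Q ∈ S k := by
          rw [hSeq]; exact ⟨Q, hQ, by omega, rfl⟩
        have h1 : wt W P ≤ a k := le_csSup (hbdd k) hPk
        have h2 : wt W Q ≤ a k := le_csSup (hbdd k) hQk
        rw [← hMw, ← hNw, ← hw]
        linarith
      have h1 : sSup (S (k + 1)) ≤ a k + a k - sSup (S (k - 1)) := by
        apply csSup_le hne1
        intro x hx
        have h2 : sSup (S (k - 1)) ≤ a k + a k - x := by
          apply csSup_le hne2
          intro y hy
          have := key x hx y hy
          linarith
        linarith
      linarith
    linarith
  refine ⟨?_, hconc⟩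
  -- telescoping identity
  have htel : ∀ m l, m ≤ l → a l - a m = ∑ i ∈ Finset.Ico m l, (a (i + 1) - a i) := by
    intro m l h
    induction l, h using Nat.le_induction with
    | base => simp
    | succ l hml ih => rw [Finset.sum_Ico_succ_top hml, ← ih]; ring
  have hstep : ∀ j, 1 ≤ j → j + 1 ≤ n → a (j + 1) - a j ≤ a j - a (j - 1) := by
    intro j h1 h2
    have := hconc j h1 (by omega)
    linarith
  have hanti : ∀ i j, i ≤ j → j + 1 ≤ n → a (j + 1) - a j ≤ a (i + 1) - a i := by
    intro i j hij
    induction j, hij using Nat.le_induction with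
    | base => intro _; exact le_rfl
    | succ j hij ih =>
      intro h
      have h1 := hstep (j + 1) (by omega) h
      simp only [Nat.add_sub_cancel] at h1
      exact le_trans h1 (ih (by omega))
  -- the key pointwise inequality at the optimal slope
  have hkey : ∀ k, k ≤ n → ∀ j, j ≤ n →
      a j - a k ≤ ((j : ℝ) - (k : ℝ)) * (a (k - 1 + 1) - a (k - 1)) := by
    intro k hk j hj
    set x₀ := a (k - 1 + 1) - a (k - 1) with hx₀
    rcases le_or_gt k j with h | h
    · have h1 := htel k j h
      have h2 : ∀ i ∈ Finset.Ico k j, a (i + 1) - a i ≤ x₀ := by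
        intro i hi
        obtain ⟨hik, hij⟩ := Finset.mem_Ico.1 hi
        exact hanti (k - 1) i (by omega) (by omega)
      calc a j - a k = ∑ i ∈ Finset.Ico k j, (a (i + 1) - a i) := h1
        _ ≤ (Finset.Ico k j).card • x₀ := Finset.sum_le_card_nsmul _ _ _ h2
        _ = ((j - k : ℕ) : ℝ) * x₀ := by rw [Nat.card_Ico, nsmul_eq_mul]
        _ = ((j : ℝ) - k) * x₀ := by rw [Nat.cast_sub h]
    · have h1 := htel j k h.le
      have h2 : ∀ i ∈ Finset.Ico j k, x₀ ≤ a (i + 1) - a i := by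
        intro i hi
        obtain ⟨hij, hik⟩ := Finset.mem_Ico.1 hi
        exact hanti i (k - 1) (by omega) (by omega)
      have h3 : (Finset.Ico j k).card • x₀ ≤ ∑ i ∈ Finset.Ico j k, (a (i + 1) - a i) :=
        Finset.card_nsmul_le_sum _ _ _ h2
      rw [Nat.card_Ico, nsmul_eq_mul, Nat.cast_sub h.le, ← h1] at h3
      have hring : ((j : ℝ) - k) * x₀ = -(((k : ℝ) - j) * x₀) := by ring
      linarith
  -- the canonical-form identity
  intro k hk
  have hub : ∀ x : ℝ,
      a k ≤ (⨆ j : Fin (n + 1), (a j + ((n : ℝ) - (j : ℕ)) * x)) - ((n : ℝ) - k) * x := by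
    intro x
    have h1 : a k + ((n : ℝ) - k) * x ≤
        ⨆ j : Fin (n + 1), (a j + ((n : ℝ) - (j : ℕ)) * x) := by
      have := le_ciSup (f := fun j : Fin (n + 1) => a j + ((n : ℝ) - (j : ℕ)) * x)
        (Set.Finite.bddAbove (Set.finite_range _)) (⟨k, by omega⟩ : Fin (n + 1))
      simpa using this
    linarith
  apply le_antisymm
  · exact le_ciInf hub
  · set x₀ := a (k - 1 + 1) - a (k - 1) with hx₀
    have hbddb : BddBelow (Set.range (fun x : ℝ =>
        (⨆ j : Fin (n + 1), (a j + ((n : ℝ) - (j : ℕ)) * x)) - ((n : ℝ) - k) * x)) :=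
      ⟨a k, by rintro y ⟨x, rfl⟩; exact hub x⟩
    refine (ciInf_le hbddb x₀).trans ?_
    have hsup : (⨆ j : Fin (n + 1), (a j + ((n : ℝ) - (j : ℕ)) * x₀)) ≤
        a k + ((n : ℝ) - k) * x₀ := by
      apply ciSup_le
      intro j
      have hj : (j : ℕ) ≤ n := Nat.lt_succ_iff.1 j.isLt
      have hkj := hkey k hk (j : ℕ) hj
      rw [← hx₀] at hkj
      have hring : ((n : ℝ) - (j : ℕ)) * x₀ + (((j : ℕ) : ℝ) - k) * x₀ =
          ((n : ℝ) - k) * x₀ := by ring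
      linarith
    linarith
end

section
/- In a weighted complete bipartite graph K_{n,n}, let M_k and M_{k+d} be maximum-weight matchings of cardinalities k and k+d with d ≥ 1. Decompose M_k △ M_{k+d} into vertex-disjoint alternating components. Then for every even alternating path (or cycle) component p, w(p ∩ M_k) = w(p ∩ M_{k+d}); and if p_3 is an augmenting path of M_{k+d} with respect to M_k and p_4 is an augmenting path of M_k with respect to M_{k+d}, then w((p_3 ∪ p_4) ∩ M_k) = w((p_3 ∪ p_4) ∩ M_{k+d}). -/
/-!
Exchanging the edges of `M \ M'` for those of `M' \ M` on any set of components of `M △ M'`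
yields a matching again, because distinct components share no vertex. If the chosen components
contain equally many edges of `M \ M'` and of `M' \ M`, the exchange preserves cardinalities in
both directions, and the optimality of `M` and of `M'` give opposite weight inequalities. A single
even component is such a set. So is a pair `{c₃, c₄}` of an `M'`-augmenting and an `M`-augmenting
component: in a component the two edge counts differ by at most one, since a matching `B` inside a
connected graph with `V` vertices and `E` edges satisfies `2 |B| ≤ V ≤ E + 1`.
-/

attribute [local instance] Classical.propDecidable

/-- The bipartite graph on the vertices of `K_{n,n}` whose edges are the pairs in `D`. -/
def edgeGraph (n : ℕ) (D : Finset (Fin n × Fin n)) : SimpleGraph (Fin n ⊕ Fin n) where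
  Adj x y := ∃ e ∈ D, (x = Sum.inl e.1 ∧ y = Sum.inr e.2) ∨ (x = Sum.inr e.2 ∧ y = Sum.inl e.1)
  symm := by
    constructor
    rintro x y ⟨e, he, h | h⟩
    · exact ⟨e, he, Or.inr ⟨h.2, h.1⟩⟩
    · exact ⟨e, he, Or.inl ⟨h.2, h.1⟩⟩
  loopless := by constructor; rintro x ⟨e, he, ⟨h1, h2⟩ | ⟨h1, h2⟩⟩ <;> simp_all

/-- The connected component of the symmetric-difference graph containing the edge `e`. -/
def edgeComp (n : ℕ) (D : Finset (Fin n × Fin n)) (e : Fin n × Fin n) :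
    (edgeGraph n D).ConnectedComponent :=
  (edgeGraph n D).connectedComponentMk (Sum.inl e.1)

/-- The number of edges of `S` lying in the component `c`. -/
noncomputable def nIn (n : ℕ) (D S : Finset (Fin n × Fin n))
    (c : (edgeGraph n D).ConnectedComponent) : ℕ :=
  {e : Fin n × Fin n | e ∈ S ∧ edgeComp n D e = c}.ncard

/-- The total weight of the edges of `S` lying in the component `c`. -/
noncomputable def wIn (n : ℕ) (w : Fin n → Fin n → ℝ) (D S : Finset (Fin n × Fin n))
    (c : (edgeGraph n D).ConnectedComponent) : ℝ :=
  ∑ e ∈ S.filter (fun e => edgeComp n D e = c), w e.1 e.2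

open Finset SimpleGraph

variable {n : ℕ}

lemma IsMatching.mono {M N : Finset (Fin n × Fin n)} (hM : IsMatching n M) (hNM : N ⊆ M) :
    IsMatching n N :=
  fun e he f hf => hM e (hNM he) f (hNM hf)

section Components

variable {D : Finset (Fin n × Fin n)}

lemma edgeGraph_adj_of_mem {e : Fin n × Fin n} (he : e ∈ D) :
    (edgeGraph n D).Adj (Sum.inl e.1) (Sum.inr e.2) :=
  ⟨e, he, .inl ⟨rfl, rfl⟩⟩

lemma connectedComponentMk_inr_eq_edgeComp {e : Fin n × Fin n} (he : e ∈ D) :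
    (edgeGraph n D).connectedComponentMk (Sum.inr e.2) = edgeComp n D e :=
  (ConnectedComponent.connectedComponentMk_eq_of_adj (edgeGraph_adj_of_mem he)).symm

lemma edgeComp_eq_of_fst_eq_or_snd_eq {e f : Fin n × Fin n} (he : e ∈ D) (hf : f ∈ D)
    (h : e.1 = f.1 ∨ e.2 = f.2) : edgeComp n D e = edgeComp n D f := by
  rcases h with h | h
  · rw [edgeComp, edgeComp, h]
  · rw [← connectedComponentMk_inr_eq_edgeComp he, ← connectedComponentMk_inr_eq_edgeComp hf, h]

lemma nIn_eq_card_filter (S : Finset (Fin n × Fin n)) (c : (edgeGraph n D).ConnectedComponent) :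
    nIn n D S c = #(S.filter (edgeComp n D · = c)) := by
  rw [nIn, ← Set.ncard_coe_finset, coe_filter]

lemma natCard_edgeSet_toSimpleGraph_le (c : (edgeGraph n D).ConnectedComponent) :
    Nat.card c.toSimpleGraph.edgeSet ≤ #(D.filter (edgeComp n D · = c)) := by
  rw [← Nat.card_eq_finsetCard]
  have mem (e : D.filter (edgeComp n D · = c)) :
      Sum.inl e.1.1 ∈ c ∧ Sum.inr e.1.2 ∈ c := by
    obtain ⟨he, hc⟩ := mem_filter.1 e.2
    exact ⟨hc, (connectedComponentMk_inr_eq_edgeComp he).trans hc⟩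
  refine Nat.card_le_card_of_surjective (fun e => ⟨s(⟨_, (mem e).1⟩, ⟨_, (mem e).2⟩),
    (c.toSimpleGraph_adj _ _).2 (edgeGraph_adj_of_mem (mem_filter.1 e.2).1)⟩) ?_
  rintro ⟨z, hz⟩
  induction z using Sym2.ind with
  | h u v =>
    obtain ⟨e, he, ⟨hu, hv⟩ | ⟨hu, hv⟩⟩ := hz
    · have he' : e ∈ D.filter (edgeComp n D · = c) :=
        mem_filter.2 ⟨he, by rw [edgeComp, ← hu]; exact u.2⟩
      obtain rfl : u = ⟨_, (mem ⟨e, he'⟩).1⟩ := Subtype.ext hu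
      obtain rfl : v = ⟨_, (mem ⟨e, he'⟩).2⟩ := Subtype.ext hv
      exact ⟨⟨e, he'⟩, rfl⟩
    · have he' : e ∈ D.filter (edgeComp n D · = c) :=
        mem_filter.2 ⟨he, by rw [edgeComp, ← hv]; exact v.2⟩
      obtain rfl : u = ⟨_, (mem ⟨e, he'⟩).2⟩ := Subtype.ext hu
      obtain rfl : v = ⟨_, (mem ⟨e, he'⟩).1⟩ := Subtype.ext hv
      exact ⟨⟨e, he'⟩, Subtype.ext Sym2.eq_swap⟩

lemma two_mul_card_filter_le_natCard {B : Finset (Fin n × Fin n)} (hB : IsMatching n B)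
    (hBD : B ⊆ D) (c : (edgeGraph n D).ConnectedComponent) :
    2 * #(B.filter (edgeComp n D · = c)) ≤ Nat.card c := by
  have mem (e : B.filter (edgeComp n D · = c)) :
      Sum.inl e.1.1 ∈ c ∧ Sum.inr e.1.2 ∈ c := by
    obtain ⟨he, hc⟩ := mem_filter.1 e.2
    exact ⟨hc, (connectedComponentMk_inr_eq_edgeComp (hBD he)).trans hc⟩
  have hinj : Function.Injective (Sum.elim (fun e => (⟨_, (mem e).1⟩ : c))
      (fun e => (⟨_, (mem e).2⟩ : c))) := by
    have hne (e f : B.filter (edgeComp n D · = c)) (h : e ≠ f) :=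
      hB e.1 (mem_filter.1 e.2).1 f.1 (mem_filter.1 f.2).1 (Subtype.coe_ne_coe.2 h)
    rintro (e | e) (f | f) h <;> simp only [Sum.elim_inl, Sum.elim_inr, Subtype.mk.injEq,
      Sum.inl.injEq, Sum.inr.injEq, reduceCtorEq] at h
    · by_contra hef; exact (hne e f fun h' => hef (congrArg _ h')).1 h
    · by_contra hef; exact (hne e f fun h' => hef (congrArg _ h')).2 h
  have := Nat.card_le_card_of_injective _ hinj
  rwa [Nat.card_sum, Nat.card_eq_finsetCard, ← two_mul] at this

lemma two_mul_card_filter_le_card_filter_add_one {B : Finset (Fin n × Fin n)}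
    (hB : IsMatching n B) (hBD : B ⊆ D) (c : (edgeGraph n D).ConnectedComponent) :
    2 * #(B.filter (edgeComp n D · = c)) ≤ #(D.filter (edgeComp n D · = c)) + 1 :=
  calc 2 * #(B.filter (edgeComp n D · = c))
      _ ≤ Nat.card c := two_mul_card_filter_le_natCard hB hBD c
      _ ≤ Nat.card c.toSimpleGraph.edgeSet + 1 :=
        c.connected_toSimpleGraph.card_vert_le_card_edgeSet_add_one
      _ ≤ #(D.filter (edgeComp n D · = c)) + 1 :=
        Nat.add_le_add_right (natCard_edgeSet_toSimpleGraph_le c) 1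

end Components

lemma nIn_le_nIn_add_one {A B D : Finset (Fin n × Fin n)} (hB : IsMatching n B)
    (hD : D = A ∪ B) (hAB : Disjoint A B) (c : (edgeGraph n D).ConnectedComponent) :
    nIn n D B c ≤ nIn n D A c + 1 := by
  subst hD
  have h := two_mul_card_filter_le_card_filter_add_one hB subset_union_right c
  rw [filter_union, card_union_of_disjoint (disjoint_filter_filter hAB)] at h
  rw [nIn_eq_card_filter, nIn_eq_card_filter]
  omega

section Swap

variable {D : Finset (Fin n × Fin n)}

lemma card_filter_mem_eq_sum_nIn (S : Finset (Fin n × Fin n))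
    (s : Finset (edgeGraph n D).ConnectedComponent) :
    #(S.filter (edgeComp n D · ∈ s)) = ∑ c ∈ s, nIn n D S c := by
  have hmaps : Set.MapsTo (edgeComp n D) (S.filter (edgeComp n D · ∈ s)) s :=
    fun e he => (mem_filter.1 he).2
  rw [card_eq_sum_card_fiberwise hmaps]
  refine sum_congr rfl fun c hc => ?_
  rw [nIn_eq_card_filter, filter_filter]
  congr 1
  exact filter_congr fun e _ => ⟨And.right, fun h => ⟨h ▸ hc, h⟩⟩

lemma sum_filter_mem_eq_sum_wIn (w : Fin n → Fin n → ℝ) (S : Finset (Fin n × Fin n))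
    (s : Finset (edgeGraph n D).ConnectedComponent) :
    ∑ e ∈ S.filter (edgeComp n D · ∈ s), w e.1 e.2 = ∑ c ∈ s, wIn n w D S c := by
  rw [← sum_fiberwise_of_maps_to (g := edgeComp n D) (t := s) fun e he => (mem_filter.1 he).2]
  refine sum_congr rfl fun c hc => ?_
  rw [wIn, filter_filter]
  exact sum_congr (filter_congr fun e _ => ⟨And.right, fun h => ⟨h ▸ hc, h⟩⟩) fun _ _ => rfl

noncomputable def swapComponents (M M' : Finset (Fin n × Fin n))
    (s : Finset (edgeGraph n D).ConnectedComponent) : Finset (Fin n × Fin n) :=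
  M \ (M \ M').filter (edgeComp n D · ∈ s) ∪ (M' \ M).filter (edgeComp n D · ∈ s)

variable {M M' : Finset (Fin n × Fin n)}

lemma card_swapComponents (s : Finset (edgeGraph n D).ConnectedComponent) :
    #(swapComponents M M' s) + ∑ c ∈ s, nIn n D (M \ M') c =
      #M + ∑ c ∈ s, nIn n D (M' \ M) c := by
  have hsub : (M \ M').filter (edgeComp n D · ∈ s) ⊆ M := (filter_subset _ _).trans sdiff_subset
  rw [swapComponents, card_union_of_disjoint (disjoint_sdiff.mono sdiff_subset (filter_subset _ _)),
    ← card_filter_mem_eq_sum_nIn, ← card_filter_mem_eq_sum_nIn, card_sdiff_of_subset hsub]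
  have := card_le_card hsub
  omega

lemma wSum_swapComponents (w : Fin n → Fin n → ℝ)
    (s : Finset (edgeGraph n D).ConnectedComponent) :
    wSum n w (swapComponents M M' s) + ∑ c ∈ s, wIn n w D (M \ M') c =
      wSum n w M + ∑ c ∈ s, wIn n w D (M' \ M) c := by
  have hsub : (M \ M').filter (edgeComp n D · ∈ s) ⊆ M := (filter_subset _ _).trans sdiff_subset
  rw [swapComponents, wSum, wSum, sum_union (disjoint_sdiff.mono sdiff_subset (filter_subset _ _)),
    ← sum_filter_mem_eq_sum_wIn, ← sum_filter_mem_eq_sum_wIn, sum_sdiff_eq_sub hsub]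
  ring

lemma fst_ne_and_snd_ne_of_mem_swapComponents {s : Finset (edgeGraph n D).ConnectedComponent}
    (hD : D = symmDiff M M') (hM' : IsMatching n M')
    {e f : Fin n × Fin n} (he : e ∈ M \ (M \ M').filter (edgeComp n D · ∈ s))
    (hf : f ∈ (M' \ M).filter (edgeComp n D · ∈ s)) : e.1 ≠ f.1 ∧ e.2 ≠ f.2 := by
  obtain ⟨heM, he'⟩ := mem_sdiff.1 he
  obtain ⟨⟨hfM', hfM⟩, hfs⟩ := mem_filter.1 hf |>.imp_left mem_sdiff.1
  by_cases heM' : e ∈ M'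
  · exact hM' e heM' f hfM' fun h => hfM (h ▸ heM)
  · have heD : e ∈ D := hD ▸ mem_symmDiff.2 (.inl ⟨heM, heM'⟩)
    have hfD : f ∈ D := hD ▸ mem_symmDiff.2 (.inr ⟨hfM', hfM⟩)
    refine ⟨fun h => he' ?_, fun h => he' ?_⟩ <;>
      exact mem_filter.2 ⟨mem_sdiff.2 ⟨heM, heM'⟩,
        edgeComp_eq_of_fst_eq_or_snd_eq heD hfD (by tauto) ▸ hfs⟩

lemma isMatching_swapComponents (hD : D = symmDiff M M') (hM : IsMatching n M)
    (hM' : IsMatching n M') (s : Finset (edgeGraph n D).ConnectedComponent) :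
    IsMatching n (swapComponents M M' s) := by
  intro e he f hf hef
  rcases mem_union.1 he with he | he <;> rcases mem_union.1 hf with hf | hf
  · exact hM e (sdiff_subset he) f (sdiff_subset hf) hef
  · exact fst_ne_and_snd_ne_of_mem_swapComponents hD hM' he hf
  · exact (fst_ne_and_snd_ne_of_mem_swapComponents hD hM' hf he).imp Ne.symm Ne.symm
  · exact hM' e (sdiff_subset (filter_subset _ _ he)) f (sdiff_subset (filter_subset _ _ hf)) hef

lemma sum_wIn_le_of_sum_nIn_eq (w : Fin n → Fin n → ℝ) (hD : D = symmDiff M M')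
    (hM : IsMatching n M) (hM' : IsMatching n M')
    (hopt : ∀ N, IsMatching n N → #N = #M → wSum n w N ≤ wSum n w M)
    (s : Finset (edgeGraph n D).ConnectedComponent)
    (hs : ∑ c ∈ s, nIn n D (M' \ M) c = ∑ c ∈ s, nIn n D (M \ M') c) :
    ∑ c ∈ s, wIn n w D (M' \ M) c ≤ ∑ c ∈ s, wIn n w D (M \ M') c := by
  have hcard := card_swapComponents (M := M) (M' := M') s
  have hweight := wSum_swapComponents (M := M) (M' := M') w s
  have hle := hopt _ (isMatching_swapComponents hD hM hM' s) (by omega)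
  linarith

lemma sum_wIn_eq_of_sum_nIn_eq (w : Fin n → Fin n → ℝ) (hD : D = symmDiff M M')
    (hM : IsMatching n M) (hM' : IsMatching n M')
    (hopt : ∀ N, IsMatching n N → #N = #M → wSum n w N ≤ wSum n w M)
    (hopt' : ∀ N, IsMatching n N → #N = #M' → wSum n w N ≤ wSum n w M')
    (s : Finset (edgeGraph n D).ConnectedComponent)
    (hs : ∑ c ∈ s, nIn n D (M' \ M) c = ∑ c ∈ s, nIn n D (M \ M') c) :
    ∑ c ∈ s, wIn n w D (M \ M') c = ∑ c ∈ s, wIn n w D (M' \ M) c :=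
  le_antisymm (sum_wIn_le_of_sum_nIn_eq w (hD.trans (symmDiff_comm M M')) hM' hM hopt' s hs.symm)
    (sum_wIn_le_of_sum_nIn_eq w hD hM hM' hopt s hs)

end Swap

theorem stmt11_general (n k d : ℕ) (w : Fin n → Fin n → ℝ)
    (M M' : Finset (Fin n × Fin n))
    (hM : IsMatching n M) (hck : M.card = k)
    (hopt : ∀ N, IsMatching n N → N.card = k → wSum n w N ≤ wSum n w M)
    (hM' : IsMatching n M') (hck' : M'.card = k + d)
    (hopt' : ∀ N, IsMatching n N → N.card = k + d → wSum n w N ≤ wSum n w M') :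
    (∀ c : (edgeGraph n (symmDiff M M')).ConnectedComponent,
      nIn n (symmDiff M M') (M' \ M) c = nIn n (symmDiff M M') (M \ M') c →
      wIn n w (symmDiff M M') (M \ M') c = wIn n w (symmDiff M M') (M' \ M) c) ∧
    (∀ c₃ c₄ : (edgeGraph n (symmDiff M M')).ConnectedComponent,
      nIn n (symmDiff M M') (M \ M') c₃ < nIn n (symmDiff M M') (M' \ M) c₃ →
      nIn n (symmDiff M M') (M' \ M) c₄ < nIn n (symmDiff M M') (M \ M') c₄ →
      wIn n w (symmDiff M M') (M \ M') c₃ + wIn n w (symmDiff M M') (M \ M') c₄ =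
      wIn n w (symmDiff M M') (M' \ M) c₃ + wIn n w (symmDiff M M') (M' \ M) c₄) := by
  have hswap := sum_wIn_eq_of_sum_nIn_eq w rfl hM hM'
    (fun N hN h => hopt N hN (h.trans hck)) (fun N hN h => hopt' N hN (h.trans hck'))
  refine ⟨fun c hc => by simpa using hswap {c} (by simpa using hc), fun c₃ c₄ h₃ h₄ => ?_⟩
  have h₃' := nIn_le_nIn_add_one (hM'.mono sdiff_subset) (symmDiff_def M M')
    disjoint_sdiff_sdiff c₃
  have h₄' := nIn_le_nIn_add_one (hM.mono sdiff_subset) ((symmDiff_def M M').trans (union_comm _ _))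
    disjoint_sdiff_sdiff c₄
  have hne : c₃ ≠ c₄ := by rintro rfl; omega
  simpa [sum_pair hne] using hswap {c₃, c₄} (by rw [sum_pair hne, sum_pair hne]; omega)

/-- for maximum-weight matchings `M` (card k) and `M'` (card k + d) in a
weighted `K_{n,n}`, every even alternating component of M △ M' has equal `M`- and
`M'`-weight, and any pair of one `M'`-augmenting and one `M`-augmenting component has equal
total `M`- and `M'`-weight. -/
theorem stmt11 (n k d : ℕ) (hd : 1 ≤ d) (w : Fin n → Fin n → ℝ)
    (M M' : Finset (Fin n × Fin n))
    (hM : IsMatching n M) (hck : M.card = k)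
    (hopt : ∀ N, IsMatching n N → N.card = k → wSum n w N ≤ wSum n w M)
    (hM' : IsMatching n M') (hck' : M'.card = k + d)
    (hopt' : ∀ N, IsMatching n N → N.card = k + d → wSum n w N ≤ wSum n w M') :
    (∀ c : (edgeGraph n (symmDiff M M')).ConnectedComponent,
      nIn n (symmDiff M M') (M' \ M) c = nIn n (symmDiff M M') (M \ M') c →
      wIn n w (symmDiff M M') (M \ M') c = wIn n w (symmDiff M M') (M' \ M) c) ∧
    (∀ c₃ c₄ : (edgeGraph n (symmDiff M M')).ConnectedComponent,
      nIn n (symmDiff M M') (M \ M') c₃ < nIn n (symmDiff M M') (M' \ M) c₃ →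
      nIn n (symmDiff M M') (M' \ M) c₄ < nIn n (symmDiff M M') (M \ M') c₄ →
      wIn n w (symmDiff M M') (M \ M') c₃ + wIn n w (symmDiff M M') (M \ M') c₄ =
      wIn n w (symmDiff M M') (M' \ M) c₃ + wIn n w (symmDiff M M') (M' \ M) c₄) :=
  stmt11_general n k d w M M' hM hck hopt hM' hck' hopt'
end

section
/- Let (a_k)_{k=0}^n be real numbers and let λ_1 ≤ λ_2 ≤ ... ≤ λ_n be defined by λ_k = a_{k−1} − a_k (assuming (a_k) is concave so that the λ_k are non-decreasing). Then for every x ∈ ℝ, max_{0 ≤ k ≤ n}(a_k + kx) = a_n + Σ_{j=1}^n max(x, λ_j). -/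
/-! Induction on `n`, with `λⱼ = a_{j-1} - aⱼ` nondecreasing. Passing from `n` to `n + 1` adds the
term `a_{n+1} + (n+1)x` to the maximum and the factor `max(x, λ_{n+1})` to the sum. If
`x ≥ λ_{n+1}`, then every `λⱼ ≤ x`, so the old maximum equals `aₙ + nx ≤ a_{n+1} + (n+1)x` and the
new term wins. If `x ≤ λ_{n+1}`, the new term is at most `a_{n+1} + λ_{n+1} + Σ max(x, λⱼ)`,
which is the old maximum, and both sides are unchanged. -/

open Finset

theorem Fin.ciSup_eq_sup'_range {α : Type*} [ConditionallyCompleteLattice α] (n : ℕ) (f : ℕ → α) :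
    ⨆ k : Fin (n + 1), f k = (range (n + 1)).sup' nonempty_range_add_one f := by
  rw [← sup'_univ_eq_ciSup]
  have h := sup'_map (s := (univ : Finset (Fin (n + 1)))) (f := Fin.valEmbedding) f (by simp)
  simp only [Fin.map_valEmbedding_univ, Nat.Iio_eq_range] at h
  exact h.symm

section

variable {α : Type*} [AddCommGroup α] [LinearOrder α] [IsOrderedAddMonoid α]

theorem sup'_range_add_nsmul_eq_add_sum_max (a : ℕ → α) (x : α) (n : ℕ)
    (hmono : MonotoneOn (fun j => a (j - 1) - a j) (Set.Icc 1 n)) :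
    (range (n + 1)).sup' nonempty_range_add_one (fun k => a k + k • x) =
      a n + ∑ j ∈ Icc 1 n, max x (a (j - 1) - a j) := by
  induction n with
  | zero => simp
  | succ m ih =>
    rw [sup'_congr nonempty_range_add_one range_add_one (fun _ _ => rfl),
      sup'_insert (H := nonempty_range_add_one),
      ih (hmono.mono (Set.Icc_subset_Icc_right m.le_succ)), sum_Icc_succ_top (by omega),
      Nat.add_sub_cancel]
    set S := ∑ j ∈ Icc 1 m, max x (a (j - 1) - a j)
    rcases le_total (a m - a (m + 1)) x with hle | hge
    · have hS : S = m • x := by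
        refine (sum_congr rfl fun j hj => max_eq_left (le_trans ?_ hle)).trans ?_
        · simpa using hmono (a := j) (b := m + 1) (by grind) (by grind) (by grind)
        · rw [sum_const, Nat.card_Icc, Nat.add_sub_cancel]
      have ham : a m ≤ a (m + 1) + x := sub_le_iff_le_add'.mp hle
      rw [hS, max_eq_left hle, succ_nsmul, max_eq_left (by
        calc a m + m • x ≤ a (m + 1) + x + m • x := by gcongr
          _ = a (m + 1) + (m • x + x) := by abel)]
    · have hxS : (m + 1) • x ≤ S + (a m - a (m + 1)) := by
        rw [succ_nsmul]
        gcongr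
        simpa using card_nsmul_le_sum (Icc 1 m) _ x fun j _ => le_max_left x (a (j - 1) - a j)
      rw [max_eq_right hge, max_eq_right (by
        calc a (m + 1) + (m + 1) • x ≤ a (m + 1) + (S + (a m - a (m + 1))) := by gcongr
          _ = a m + S := by abel)]
      abel

end

/-- for a concave real sequence (aₖ) with λₖ = a_{k−1} − aₖ,
max_k (aₖ + kx) = aₙ + Σ_{j=1}^n max(x, λⱼ) for every real x. -/
theorem stmt13 (n : ℕ) (a : ℕ → ℝ)
    (hconc : ∀ k, 1 ≤ k → k ≤ n - 1 → (a (k - 1) + a (k + 1)) / 2 ≤ a k) :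
    ∀ x : ℝ, (⨆ k : Fin (n + 1), (a k + ((k : ℕ) : ℝ) * x)) =
      a n + ∑ j ∈ Finset.Icc 1 n, max x (a (j - 1) - a j) := by
  intro x
  have hmono : MonotoneOn (fun j => a (j - 1) - a j) (Set.Icc 1 n) := by
    refine monotoneOn_of_le_add_one Set.ordConnected_Icc fun k _ hk hk1 => ?_
    have := hconc k hk.1 (by grind)
    simp only [Nat.add_sub_cancel]
    linarith
  rw [Fin.ciSup_eq_sup'_range n fun k => a k + (k : ℝ) * x]
  simpa only [nsmul_eq_mul] using sup'_range_add_nsmul_eq_add_sum_max a x n hmono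
end

section
/- Let (ω_k)_{k=0}^n be the optimal values of the k-cardinality assignment LP relaxation for an n×n real weight matrix W: maximize Σ w_ij x_ij subject to row sums ≤ 1, column sums ≤ 1, Σ x_ij = k, x_ij ≥ 0. Then the sequence (ω_k) is concave: ω_k ≥ (ω_{k−1} + ω_{k+1})/2 for 1 ≤ k ≤ n−1. -/
/-- Feasibility for the k-cardinality assignment LP relaxation. -/
def LPFeasible (n k : ℕ) (x : Fin n → Fin n → ℝ) : Prop :=
  (∀ i j, 0 ≤ x i j) ∧ (∀ i, ∑ j, x i j ≤ 1) ∧ (∀ j, ∑ i, x i j ≤ 1) ∧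
  (∑ i, ∑ j, x i j = (k : ℝ))

/-- Optimal value of the k-cardinality assignment LP relaxation. -/
noncomputable def lpVal (n : ℕ) (w : Fin n → Fin n → ℝ) (k : ℕ) : ℝ :=
  sSup {v : ℝ | ∃ x : Fin n → Fin n → ℝ, LPFeasible n k x ∧ v = ∑ i, ∑ j, w i j * x i j}

lemma lp_nonempty (n k : ℕ) (w : Fin n → Fin n → ℝ) (hk : k ≤ n) (hn : 1 ≤ n) :
    Set.Nonempty {v : ℝ | ∃ x : Fin n → Fin n → ℝ, LPFeasible n k x ∧
      v = ∑ i, ∑ j, w i j * x i j} := by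
  refine ⟨_, fun i j => if i = j then (k : ℝ) / n else 0, ⟨?_, ?_, ?_, ?_⟩, rfl⟩
  · intro i j
    by_cases h : i = j <;> simp [h] <;> positivity
  · intro i
    simp only [Finset.sum_ite_eq, Finset.mem_univ, if_true]
    rw [div_le_one (by exact_mod_cast hn)]
    exact_mod_cast hk
  · intro j
    simp only [Finset.sum_ite_eq', Finset.mem_univ, if_true]
    rw [div_le_one (by exact_mod_cast hn)]
    exact_mod_cast hk
  · simp only [Finset.sum_ite_eq, Finset.mem_univ, if_true, Finset.sum_const,
      Finset.card_univ, Fintype.card_fin, nsmul_eq_mul]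
    field_simp

lemma lp_bdd (n k : ℕ) (w : Fin n → Fin n → ℝ) :
    BddAbove {v : ℝ | ∃ x : Fin n → Fin n → ℝ, LPFeasible n k x ∧
      v = ∑ i, ∑ j, w i j * x i j} := by
  refine ⟨∑ i, ∑ j, |w i j|, ?_⟩
  rintro v ⟨x, ⟨hpos, hrow, _, _⟩, rfl⟩
  refine Finset.sum_le_sum fun i _ => Finset.sum_le_sum fun j _ => ?_
  have hx1 : x i j ≤ 1 := by
    calc x i j ≤ ∑ j', x i j' :=
          Finset.single_le_sum (fun j' _ => hpos i j') (Finset.mem_univ j)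
      _ ≤ 1 := hrow i
  calc w i j * x i j ≤ |w i j * x i j| := le_abs_self _
    _ = |w i j| * |x i j| := abs_mul _ _
    _ ≤ |w i j| * 1 := by
        apply mul_le_mul_of_nonneg_left _ (abs_nonneg _)
        rw [abs_of_nonneg (hpos i j)]; exact hx1
    _ = |w i j| := mul_one _

/-- the optimal values of the k-cardinality assignment LP form a concave
sequence. -/
theorem stmt15 (n : ℕ) (w : Fin n → Fin n → ℝ) (k : ℕ) (h1 : 1 ≤ k) (h2 : k + 1 ≤ n) :
    (lpVal n w (k - 1) + lpVal n w (k + 1)) / 2 ≤ lpVal n w k := by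
  have hn : 1 ≤ n := le_trans (by omega) h2
  have key : ∀ v₁ ∈ {v : ℝ | ∃ x : Fin n → Fin n → ℝ, LPFeasible n (k - 1) x ∧
      v = ∑ i, ∑ j, w i j * x i j},
      ∀ v₂ ∈ {v : ℝ | ∃ x : Fin n → Fin n → ℝ, LPFeasible n (k + 1) x ∧
      v = ∑ i, ∑ j, w i j * x i j},
      (v₁ + v₂) / 2 ≤ lpVal n w k := by
    rintro v₁ ⟨x, ⟨hx0, hxr, hxc, hxs⟩, rfl⟩ v₂ ⟨y, ⟨hy0, hyr, hyc, hys⟩, rfl⟩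
    apply le_csSup (lp_bdd n k w)
    refine ⟨fun i j => (x i j + y i j) / 2, ⟨?_, ?_, ?_, ?_⟩, ?_⟩
    · intro i j; have := hx0 i j; have := hy0 i j; linarith
    · intro i
      have e : ∑ j, (x i j + y i j) / 2 = ((∑ j, x i j) + ∑ j, y i j) / 2 := by
        rw [← Finset.sum_div, Finset.sum_add_distrib]
      rw [e]; linarith [hxr i, hyr i]
    · intro j
      have e : ∑ i, (x i j + y i j) / 2 = ((∑ i, x i j) + ∑ i, y i j) / 2 := by
        rw [← Finset.sum_div, Finset.sum_add_distrib]
      rw [e]; linarith [hxc j, hyc j]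
    · have e : ∑ i, ∑ j, (x i j + y i j) / 2
          = ((∑ i, ∑ j, x i j) + ∑ i, ∑ j, y i j) / 2 := by
        simp only [← Finset.sum_div, Finset.sum_add_distrib]
      rw [e, hxs, hys]
      have : ((k - 1 : ℕ) : ℝ) = (k : ℝ) - 1 := by push_cast [h1]; ring
      rw [this]; push_cast; ring
    · simp only [← mul_div_assoc, mul_add, ← Finset.sum_div, Finset.sum_add_distrib]
  have hne1 := lp_nonempty n (k - 1) w (by omega) hn
  have hne2 := lp_nonempty n (k + 1) w h2 hn
  rw [div_le_iff₀ (by norm_num : (0:ℝ) < 2)] at *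
  have h1' : lpVal n w (k - 1) ≤ 2 * lpVal n w k - lpVal n w (k + 1) := by
    apply csSup_le hne1
    intro v₁ hv₁
    have h2' : lpVal n w (k + 1) ≤ 2 * lpVal n w k - v₁ := by
      apply csSup_le hne2
      intro v₂ hv₂
      have := key v₁ hv₁ v₂ hv₂
      linarith [(div_le_iff₀ (by norm_num : (0:ℝ) < 2)).mp this]
    linarith
  linarith
end
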